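/- arXiv:0807.2028 — 4 statements merged into one kernel-verified Lean document; each statement's English description precedes it below -/
import Mathlib

section
/- Let L > 0 and let (x_t) be a trajectory of the continuous-agent Krause model with x₀ ∈ X_L. Then x_{t+1} − x_t →_μ 0, that is: for every ε > 0 there exists T such that for all t ≥ T, λ({α ∈ [0,1] : |x_{t+1}(α) − x_t(α)| ≥ ε}) < ε. -/
/-!
The energy `E(x) = ∬ min ((x α - x β)², 1)` is a Lyapunov function. Write `d = y - x` for one
Krause step `x ↦ y` and `K` for the pairs of neighbours. Expanding `(x α - x β)²` on `K` in terms
of `y` leaves the cross terms `d α (y α - x β)`, whose integral over `β ∈ K α` vanishes because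
`y α` is the mean of `x` over `K α`. Hence `E(y) + ∬_K (d α + d β)² ≤ E(x)`, so these
dissipations are summable and tend to `0`. If `d ≥ ε` on `A` (or `d ≤ -ε`), sorting the agents
of `A` into the `⌊L⌋ + 1` unit bins of opinion, whose pairs are all neighbours, Cauchy–Schwarz
gives `4 ε² λ(A)² ≤ (⌊L⌋ + 1) ∬_K (d α + d β)²`, so `λ(A) → 0`.
-/

open MeasureTheory

/-- `(x_t)` is a trajectory of the continuous-agent Krause model in `X_L`:
each `x_t` is measurable, maps `[0,1]` into `[0,L]`, and the update rule holds
on `[0,1]` (with the convention that the opinion stays unchanged when the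
neighborhood has measure zero). -/
def IsKrauseTraj (L : ℝ) (x : ℕ → ℝ → ℝ) : Prop :=
  (∀ t, Measurable (x t)) ∧
  (∀ t, ∀ α ∈ Set.Icc (0 : ℝ) 1, x t α ∈ Set.Icc (0 : ℝ) L) ∧
  (∀ t, ∀ α ∈ Set.Icc (0 : ℝ) 1,
    x (t + 1) α =
      if volume {β ∈ Set.Icc (0 : ℝ) 1 | |x t α - x t β| < 1} = 0 then x t α
      else (∫ β in {β ∈ Set.Icc (0 : ℝ) 1 | |x t α - x t β| < 1}, x t β) /
        (volume {β ∈ Set.Icc (0 : ℝ) 1 | |x t α - x t β| < 1}).toReal)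

open Set Filter Topology

section

variable {Ω : Type*} [MeasurableSpace Ω]

theorem setIntegral_const_sub_eq_zero_of_eq_div {μ : Measure Ω} {s : Set Ω} {f : Ω → ℝ}
    {c c₀ : ℝ} (hs : μ s ≠ ⊤) (hf : IntegrableOn f s μ)
    (hc : c = if μ s = 0 then c₀ else (∫ β in s, f β ∂μ) / (μ s).toReal) :
    ∫ β in s, (c - f β) ∂μ = 0 := by
  rw [integral_sub (integrableOn_const (C := c) hs) hf, setIntegral_const, smul_eq_mul,
    measureReal_def]
  split_ifs at hc with h0
  · simp [h0, Measure.restrict_eq_zero.2 h0]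
  · rw [hc, mul_div_cancel₀ _ (ENNReal.toReal_ne_zero.2 ⟨h0, hs⟩), sub_self]

theorem ae_fst_and_snd {μ : Measure Ω} [SFinite μ] {P : Ω → Prop} (h : ∀ᵐ α ∂μ, P α) :
    ∀ᵐ z ∂μ.prod μ, P z.1 ∧ P z.2 :=
  (Measure.quasiMeasurePreserving_fst.ae h).and (Measure.quasiMeasurePreserving_snd.ae h)

theorem integrable_prod_of_ae_mem_isCompact {E : Type*} [TopologicalSpace E] [MeasurableSpace E]
    [OpensMeasurableSpace (E × E)] {μ : Measure Ω} [IsFiniteMeasure μ] {g : Ω → E}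
    (hg : Measurable g) {K : Set E} (hK : IsCompact K) (hgK : ∀ᵐ α ∂μ, g α ∈ K)
    {F : E × E → ℝ} (hF : Continuous F) :
    Integrable (fun z => F (g z.1, g z.2)) (μ.prod μ) := by
  obtain ⟨C, hC⟩ := (hK.prod hK).exists_bound_of_continuousOn hF.continuousOn
  refine .of_bound (hF.measurable.comp ((hg.comp measurable_fst).prodMk
    (hg.comp measurable_snd))).aestronglyMeasurable C ?_
  filter_upwards [ae_fst_and_snd hgK] with z hz using hC _ hz

theorem measureReal_univ_sq_le_card_mul_measureReal_fiberPairs {ι : Type*} [MeasurableSpace ι]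
    [MeasurableSingletonClass ι] {ν : Measure Ω} [IsFiniteMeasure ν] {g : Ω → ι}
    (hg : Measurable g) (s : Finset ι) (hgs : ∀ᵐ α ∂ν, g α ∈ s) :
    ν.real univ ^ 2 ≤ s.card * (ν.prod ν).real {z | g z.1 = g z.2} := by
  have hfiber : ∀ k, MeasurableSet (g ⁻¹' {k}) := fun k => hg (measurableSet_singleton k)
  have hcover : ν.real univ = ∑ k ∈ s, ν.real (g ⁻¹' {k}) := by
    rw [sum_measureReal_preimage_singleton s fun k _ => hfiber k]
    exact measureReal_congr (ae_eq_univ.2 (ae_iff.1 hgs)).symm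
  have hdiag : ∑ k ∈ s, ν.real (g ⁻¹' {k}) ^ 2 ≤ (ν.prod ν).real {z | g z.1 = g z.2} :=
    calc ∑ k ∈ s, ν.real (g ⁻¹' {k}) ^ 2
        = (ν.prod ν).real (⋃ k ∈ s, (g ⁻¹' {k}) ×ˢ (g ⁻¹' {k})) := by
          rw [measureReal_biUnion_finset (fun k _ j _ hkj => disjoint_prod.2
            (.inl ((pairwiseDisjoint_fiber g univ) trivial trivial hkj)))
            fun k _ => (hfiber k).prod (hfiber k)]
          simp only [measureReal_prod_prod, sq]
      _ ≤ _ := measureReal_mono <| iUnion₂_subset fun k _ z ⟨h₁, h₂⟩ => h₁.trans h₂.symm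
  calc ν.real univ ^ 2 ≤ s.card * ∑ k ∈ s, ν.real (g ⁻¹' {k}) ^ 2 :=
        hcover ▸ sq_sum_le_card_mul_sum_sq
    _ ≤ _ := by gcongr

theorem tendsto_atTop_zero_of_add_le {V S : ℕ → ℝ} (hV : ∀ t, 0 ≤ V t) (hS : ∀ t, 0 ≤ S t)
    (h : ∀ t, V (t + 1) + S t ≤ V t) : Tendsto S atTop (𝓝 0) := by
  have htelescope : ∀ n, ∑ i ∈ Finset.range n, S i ≤ V 0 - V n := by
    intro n
    induction n with
    | zero => simp
    | succ n ih => rw [Finset.sum_range_succ]; linarith [h n]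
  exact (summable_of_sum_range_le hS fun n => by linarith [htelescope n, hV n]).tendsto_atTop_zero

theorem tendsto_zero_of_mul_sq_le {ι : Type*} {l : Filter ι} {a b : ι → ℝ} {c : ℝ} (hc : 0 < c)
    (ha : ∀ i, 0 ≤ a i) (hab : ∀ i, c * a i ^ 2 ≤ b i) (hb : Tendsto b l (𝓝 0)) :
    Tendsto a l (𝓝 0) := by
  have hsqrt : Tendsto (fun i => √(b i / c)) l (𝓝 0) := by
    simpa using (hb.div_const c).sqrt
  exact squeeze_zero ha (fun i => Real.le_sqrt_of_sq_le ((le_div_iff₀' hc).2 (hab i))) hsqrt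

end

namespace Krause

variable {Ω : Type*}

def neighbors (x : Ω → ℝ) (α : Ω) : Set Ω := {β | |x α - x β| < 1}

def neighborPairs (x : Ω → ℝ) : Set (Ω × Ω) := {z | |x z.1 - x z.2| < 1}

theorem swap_mem_neighborPairs {x : Ω → ℝ} {z : Ω × Ω} :
    z.swap ∈ neighborPairs x ↔ z ∈ neighborPairs x := by
  change |x z.2 - x z.1| < 1 ↔ |x z.1 - x z.2| < 1
  rw [abs_sub_comm]

noncomputable def crossTerm (x y : Ω → ℝ) : Ω × Ω → ℝ :=
  (neighborPairs x).indicator fun z => (y z.1 - x z.1) * (y z.1 - x z.2)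

theorem min_sq_add_sq_le {x₁ x₂ y₁ y₂ : ℝ} (h : |x₁ - x₂| < 1) :
    min ((y₁ - y₂) ^ 2) 1 + (y₁ - x₁ + (y₂ - x₂)) ^ 2
      ≤ min ((x₁ - x₂) ^ 2) 1 + (2 * ((y₁ - x₁) * (y₁ - x₂)) + 2 * ((y₂ - x₂) * (y₂ - x₁))) := by
  rw [min_eq_left ((sq_le_one_iff_abs_le_one _).2 h.le)]
  nlinarith [min_le_left ((y₁ - y₂) ^ 2) 1]

theorem min_sq_add_indicator_le (x y : Ω → ℝ) (z : Ω × Ω) :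
    min ((y z.1 - y z.2) ^ 2) 1
        + (neighborPairs x).indicator (fun z => (y z.1 - x z.1 + (y z.2 - x z.2)) ^ 2) z
      ≤ min ((x z.1 - x z.2) ^ 2) 1 + (2 * crossTerm x y z + 2 * crossTerm x y z.swap) := by
  by_cases hz : z ∈ neighborPairs x
  · have hz' : z.swap ∈ neighborPairs x := swap_mem_neighborPairs.2 hz
    simp only [crossTerm, indicator_of_mem hz, indicator_of_mem hz', Prod.fst_swap,
      Prod.snd_swap]
    exact min_sq_add_sq_le hz
  · have hz' : z.swap ∉ neighborPairs x := mt swap_mem_neighborPairs.1 hz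
    have hfar : 1 ≤ (x z.1 - x z.2) ^ 2 := one_le_sq_iff_one_le_abs _ |>.2 (not_lt.1 hz)
    simp only [crossTerm, indicator_of_notMem hz, indicator_of_notMem hz', min_eq_right hfar]
    linarith [min_le_right ((y z.1 - y z.2) ^ 2) 1]

variable [MeasurableSpace Ω]

theorem measurableSet_neighbors {x : Ω → ℝ} (hx : Measurable x) (α : Ω) :
    MeasurableSet (neighbors x α) :=
  measurableSet_lt (measurable_const.sub hx).abs measurable_const

theorem measurableSet_neighborPairs {x : Ω → ℝ} (hx : Measurable x) :
    MeasurableSet (neighborPairs x) :=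
  measurableSet_lt ((hx.comp measurable_fst).sub (hx.comp measurable_snd)).abs measurable_const

theorem measureReal_univ_sq_le_mul_measureReal_neighborPairs {ν : Measure Ω} [IsFiniteMeasure ν]
    {L : ℝ} {f : Ω → ℝ} (hf : Measurable f) (hfL : ∀ᵐ α ∂ν, f α ∈ Icc 0 L) :
    ν.real univ ^ 2 ≤ (⌊L⌋ + 1).toNat * (ν.prod ν).real (neighborPairs f) := by
  have hbins : ∀ᵐ α ∂ν, ⌊f α⌋ ∈ Finset.Icc 0 ⌊L⌋ := by
    filter_upwards [hfL] with α ⟨h0, hL⟩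
    exact Finset.mem_Icc.2 ⟨Int.floor_nonneg.2 h0, Int.floor_mono hL⟩
  calc ν.real univ ^ 2
      ≤ (Finset.Icc 0 ⌊L⌋).card * (ν.prod ν).real {z | ⌊f z.1⌋ = ⌊f z.2⌋} :=
        measureReal_univ_sq_le_card_mul_measureReal_fiberPairs (Int.measurable_floor.comp hf) _
          hbins
    _ ≤ _ := by
      rw [Int.card_Icc, sub_zero]
      exact mul_le_mul_of_nonneg_left (measureReal_mono fun z (hz : ⌊f z.1⌋ = ⌊f z.2⌋) =>
        Int.abs_sub_lt_one_of_floor_eq_floor hz) (Nat.cast_nonneg _)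

noncomputable def energy (μ : Measure Ω) (x : Ω → ℝ) : ℝ :=
  ∫ z, min ((x z.1 - x z.2) ^ 2) 1 ∂μ.prod μ

noncomputable def dissipation (μ : Measure Ω) (x y : Ω → ℝ) : ℝ :=
  ∫ z in neighborPairs x, (y z.1 - x z.1 + (y z.2 - x z.2)) ^ 2 ∂μ.prod μ

theorem energy_nonneg (μ : Measure Ω) (x : Ω → ℝ) : 0 ≤ energy μ x :=
  integral_nonneg fun _ => le_min (sq_nonneg _) zero_le_one

theorem dissipation_nonneg (μ : Measure Ω) (x y : Ω → ℝ) : 0 ≤ dissipation μ x y :=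
  integral_nonneg fun _ => sq_nonneg _

/-- The last field says that `y α` is the mean of `x` over the neighbours of `α`, written without
division so that null neighbourhoods need no convention. -/
structure IsStep (μ : Measure Ω) (L : ℝ) (x y : Ω → ℝ) : Prop where
  measurable_left : Measurable x
  measurable_right : Measurable y
  ae_mem_left : ∀ᵐ α ∂μ, x α ∈ Icc 0 L
  ae_mem_right : ∀ᵐ α ∂μ, y α ∈ Icc 0 L
  setIntegral_neighbors : ∀ᵐ α ∂μ, ∫ β in neighbors x α, (y α - x β) ∂μ = 0

namespace IsStep

variable {μ : Measure Ω} [IsFiniteMeasure μ] {L : ℝ} {x y : Ω → ℝ}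

theorem integrable_prod (h : IsStep μ L x y) {F : (ℝ × ℝ) × (ℝ × ℝ) → ℝ} (hF : Continuous F) :
    Integrable (fun z => F ((x z.1, y z.1), (x z.2, y z.2))) (μ.prod μ) :=
  integrable_prod_of_ae_mem_isCompact (h.measurable_left.prodMk h.measurable_right)
    (isCompact_Icc.prod isCompact_Icc) (h.ae_mem_left.and h.ae_mem_right) hF

theorem integrable_increment_sum_sq (h : IsStep μ L x y) :
    Integrable (fun z => (y z.1 - x z.1 + (y z.2 - x z.2)) ^ 2) (μ.prod μ) :=
  h.integrable_prod (F := fun w => (w.1.2 - w.1.1 + (w.2.2 - w.2.1)) ^ 2) (by fun_prop)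

theorem integrable_crossTerm (h : IsStep μ L x y) : Integrable (crossTerm x y) (μ.prod μ) :=
  (h.integrable_prod (F := fun w => (w.1.2 - w.1.1) * (w.1.2 - w.2.1)) (by fun_prop)).indicator
    (measurableSet_neighborPairs h.measurable_left)

theorem integral_crossTerm_eq_zero (h : IsStep μ L x y) : ∫ z, crossTerm x y z ∂μ.prod μ = 0 := by
  rw [integral_prod _ h.integrable_crossTerm]
  refine integral_eq_zero_of_ae ?_
  filter_upwards [h.setIntegral_neighbors] with α hα
  change ∫ β, (neighbors x α).indicator (fun β => (y α - x α) * (y α - x β)) β ∂μ = 0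
  rw [integral_indicator (measurableSet_neighbors h.measurable_left α), integral_const_mul, hα,
    mul_zero]

theorem energy_add_dissipation_le (h : IsStep μ L x y) :
    energy μ y + dissipation μ x y ≤ energy μ x := by
  set K := neighborPairs x
  have hK : MeasurableSet K := measurableSet_neighborPairs h.measurable_left
  set D : Ω × Ω → ℝ := K.indicator fun z => (y z.1 - x z.1 + (y z.2 - x z.2)) ^ 2
  have hD : Integrable D (μ.prod μ) := h.integrable_increment_sum_sq.indicator hK
  have hminx : Integrable (fun z => min ((x z.1 - x z.2) ^ 2) 1) (μ.prod μ) :=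
    h.integrable_prod (F := fun w => min ((w.1.1 - w.2.1) ^ 2) 1) (by fun_prop)
  have hminy : Integrable (fun z => min ((y z.1 - y z.2) ^ 2) 1) (μ.prod μ) :=
    h.integrable_prod (F := fun w => min ((w.1.2 - w.2.2) ^ 2) 1) (by fun_prop)
  have hG := h.integrable_crossTerm
  have hG' : Integrable (fun z => crossTerm x y z.swap) (μ.prod μ) := hG.swap
  have hcross : Integrable (fun z => 2 * crossTerm x y z + 2 * crossTerm x y z.swap) (μ.prod μ) :=
    (hG.const_mul 2).add (hG'.const_mul 2)
  have hG₀' : ∫ z, crossTerm x y z.swap ∂μ.prod μ = 0 :=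
    (integral_prod_swap _).trans h.integral_crossTerm_eq_zero
  calc energy μ y + dissipation μ x y
      = ∫ z, (min ((y z.1 - y z.2) ^ 2) 1 + D z) ∂μ.prod μ := by
        rw [integral_add hminy hD, integral_indicator hK]; rfl
    _ ≤ ∫ z, (min ((x z.1 - x z.2) ^ 2) 1 + (2 * crossTerm x y z + 2 * crossTerm x y z.swap))
          ∂μ.prod μ :=
        integral_mono (hminy.add hD) (hminx.add hcross) (min_sq_add_indicator_le x y)
    _ = energy μ x := by
        rw [integral_add hminx hcross, integral_add (hG.const_mul 2) (hG'.const_mul 2),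
          integral_const_mul, integral_const_mul, h.integral_crossTerm_eq_zero, hG₀']
        simp [energy]

theorem mul_measureReal_sq_le (h : IsStep μ L x y) {A : Set Ω} (hA : MeasurableSet A) {c : ℝ}
    (hc : 0 ≤ c) (hcA : ∀ α ∈ A, ∀ β ∈ A, c ≤ (y α - x α + (y β - x β)) ^ 2) :
    c * μ.real A ^ 2 ≤ (⌊L⌋ + 1).toNat * dissipation μ x y := by
  set K := neighborPairs x
  have hK : MeasurableSet K := measurableSet_neighborPairs h.measurable_left
  have hpairs : μ.real A ^ 2 ≤ (⌊L⌋ + 1).toNat * (μ.prod μ).real (K ∩ A ×ˢ A) := by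
    have := measureReal_univ_sq_le_mul_measureReal_neighborPairs (ν := μ.restrict A)
      h.measurable_left (ae_restrict_of_ae h.ae_mem_left)
    rwa [measureReal_restrict_apply_univ, Measure.prod_restrict,
      measureReal_restrict_apply hK] at this
  have hD : IntegrableOn (fun z => (y z.1 - x z.1 + (y z.2 - x z.2)) ^ 2) K (μ.prod μ) :=
    h.integrable_increment_sum_sq.integrableOn
  have hdiss : c * (μ.prod μ).real (K ∩ A ×ˢ A) ≤ dissipation μ x y :=
    calc c * (μ.prod μ).real (K ∩ A ×ˢ A)
        ≤ ∫ z in K ∩ A ×ˢ A, (y z.1 - x z.1 + (y z.2 - x z.2)) ^ 2 ∂μ.prod μ := by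
          rw [mul_comm, ← smul_eq_mul]
          exact setIntegral_ge_of_const_le (hK.inter (hA.prod hA)) (by finiteness)
            (fun z hz => hcA _ hz.2.1 _ hz.2.2) (hD.mono_set inter_subset_left)
      _ ≤ dissipation μ x y :=
          setIntegral_mono_set hD (ae_of_all _ fun _ => sq_nonneg _)
            inter_subset_left.eventuallyLE
  calc c * μ.real A ^ 2 ≤ c * ((⌊L⌋ + 1).toNat * (μ.prod μ).real (K ∩ A ×ˢ A)) := by gcongr
    _ = (⌊L⌋ + 1).toNat * (c * (μ.prod μ).real (K ∩ A ×ˢ A)) := by ring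
    _ ≤ _ := by gcongr

end IsStep

section Trajectory

variable {μ : Measure Ω} [IsFiniteMeasure μ] {L : ℝ} {x : ℕ → Ω → ℝ}

theorem tendsto_dissipation (h : ∀ t, IsStep μ L (x t) (x (t + 1))) :
    Tendsto (fun t => dissipation μ (x t) (x (t + 1))) atTop (𝓝 0) :=
  tendsto_atTop_zero_of_add_le (fun t => energy_nonneg μ (x t))
    (fun t => dissipation_nonneg μ (x t) (x (t + 1))) fun t => (h t).energy_add_dissipation_le

theorem tendsto_measureReal_le_mul_succ_sub (h : ∀ t, IsStep μ L (x t) (x (t + 1))) {ε : ℝ}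
    (hε : 0 < ε) {σ : ℝ} (hσ : σ ^ 2 = 1) :
    Tendsto (fun t => μ.real {α | ε ≤ σ * (x (t + 1) α - x t α)}) atTop (𝓝 0) := by
  have hS : Tendsto (fun t => (⌊L⌋ + 1).toNat * dissipation μ (x t) (x (t + 1))) atTop (𝓝 0) := by
    simpa using (tendsto_dissipation h).const_mul ((⌊L⌋ + 1).toNat : ℝ)
  refine tendsto_zero_of_mul_sq_le (c := 4 * ε ^ 2) (by positivity) (fun t => measureReal_nonneg)
    (fun t => (h t).mul_measureReal_sq_le (A := {α | ε ≤ σ * (x (t + 1) α - x t α)})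
      (measurableSet_le measurable_const
        (measurable_const.mul ((h t).measurable_right.sub (h t).measurable_left)))
      (by positivity) fun α (hα : ε ≤ _) β (hβ : ε ≤ _) => ?_) hS
  have hsum : 2 * ε ≤ σ * (x (t + 1) α - x t α + (x (t + 1) β - x t β)) := by linarith
  nlinarith [sq_nonneg (σ * (x (t + 1) α - x t α + (x (t + 1) β - x t β)) - 2 * ε)]

theorem tendstoInMeasure_succ_sub (h : ∀ t, IsStep μ L (x t) (x (t + 1))) :
    TendstoInMeasure μ (fun t => x (t + 1) - x t) atTop 0 := by
  rw [tendstoInMeasure_iff_measureReal_norm]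
  intro ε hε
  have hup := tendsto_measureReal_le_mul_succ_sub h hε (one_pow 2)
  have hdown := tendsto_measureReal_le_mul_succ_sub h hε (neg_one_sq (R := ℝ))
  refine squeeze_zero (fun t => measureReal_nonneg) (fun t => ?_) (by simpa using hup.add hdown)
  refine (measureReal_mono fun α (hα : ε ≤ _) => ?_).trans (measureReal_union_le _ _)
  rw [Pi.sub_apply, Pi.zero_apply, sub_zero, Real.norm_eq_abs] at hα
  rcases le_abs'.1 hα with hneg | hpos
  · exact .inr (by change ε ≤ _; linarith)
  · exact .inl (by change ε ≤ _; linarith)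

end Trajectory

end Krause

theorem IsKrauseTraj.isStep {L : ℝ} {x : ℕ → ℝ → ℝ} (htraj : IsKrauseTraj L x) (t : ℕ) :
    Krause.IsStep (volume.restrict (Icc 0 1)) L (x t) (x (t + 1)) := by
  obtain ⟨hmeas, hmem, hupdate⟩ := htraj
  refine ⟨hmeas t, hmeas (t + 1), ae_restrict_of_forall_mem measurableSet_Icc (hmem t),
    ae_restrict_of_forall_mem measurableSet_Icc (hmem (t + 1)),
    ae_restrict_of_forall_mem measurableSet_Icc fun α hα => ?_⟩
  have hbounded : IntegrableOn (x t) (Icc 0 1) :=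
    Measure.integrableOn_of_bounded measure_Icc_lt_top.ne (hmeas t).aestronglyMeasurable
      (M := L) (ae_restrict_of_forall_mem measurableSet_Icc fun β hβ => by
        rw [Real.norm_eq_abs, abs_of_nonneg (hmem t β hβ).1]; exact (hmem t β hβ).2)
  rw [Measure.restrict_restrict' measurableSet_Icc, inter_comm,
    show Icc 0 1 ∩ Krause.neighbors (x t) α = {β ∈ Icc (0 : ℝ) 1 | |x t α - x t β| < 1} from rfl]
  exact setIntegral_const_sub_eq_zero_of_eq_div
    ((measure_mono (sep_subset _ _)).trans_lt measure_Icc_lt_top).ne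
    (hbounded.mono_set (sep_subset _ _)) (hupdate t α hα)

theorem krause_continuum_delta_to_zero_general (L : ℝ) (x : ℕ → ℝ → ℝ)
    (htraj : IsKrauseTraj L x) :
    ∀ ε > (0 : ℝ), ∃ T : ℕ, ∀ t ≥ T,
      volume {α ∈ Set.Icc (0 : ℝ) 1 | ε ≤ |x (t + 1) α - x t α|} <
        ENNReal.ofReal ε := by
  intro ε hε
  have hconv := tendstoInMeasure_iff_norm.1 (Krause.tendstoInMeasure_succ_sub htraj.isStep) ε hε
  obtain ⟨T, hT⟩ := eventually_atTop.1 (hconv.eventually_lt_const (ENNReal.ofReal_pos.2 hε))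
  refine ⟨T, fun t ht => ?_⟩
  convert hT t ht using 1
  rw [Measure.restrict_apply' measurableSet_Icc, inter_comm, inter_ofPred_eq_sep]
  simp

/-- Along any trajectory of the continuous-agent Krause model,
`x_{t+1} − x_t →_μ 0`. -/
theorem krause_continuum_delta_to_zero (L : ℝ) (hL : 0 < L) (x : ℕ → ℝ → ℝ)
    (htraj : IsKrauseTraj L x) :
    ∀ ε > (0 : ℝ), ∃ T : ℕ, ∀ t ≥ T,
      volume {α ∈ Set.Icc (0 : ℝ) 1 | ε ≤ |x (t + 1) α - x t α|} <
        ENNReal.ofReal ε :=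
  krause_continuum_delta_to_zero_general L x htraj
end

section
/- Let L > 0 and let U : X_L → X_L denote the one-step update operator of the continuous-agent Krause model. A function x ∈ X_L is a fixed point of the model, i.e. (U(x))(α) = x(α) for almost every α ∈ [0,1], if and only if there exists s ∈ F such that x(α) = s(α) for almost every α ∈ [0,1]. -/
open MeasureTheory

/-- The one-step update operator `U` of the continuous-agent Krause model. -/
noncomputable def Uop (x : ℝ → ℝ) : ℝ → ℝ := fun α =>
  if volume {β ∈ Set.Icc (0 : ℝ) 1 | |x α - x β| < 1} = 0 then x α
  else (∫ β in {β ∈ Set.Icc (0 : ℝ) 1 | |x α - x β| < 1}, x β) /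
    (volume {β ∈ Set.Icc (0 : ℝ) 1 | |x α - x β| < 1}).toReal

/-- `F`: measurable functions `[0,1] → [0,L]` whose values on `[0,1]` are
pairwise either equal or at distance at least 1. -/
def Fset (L : ℝ) : Set (ℝ → ℝ) :=
  {s | Measurable s ∧ (∀ α ∈ Set.Icc (0 : ℝ) 1, s α ∈ Set.Icc (0 : ℝ) L) ∧
    ∀ α ∈ Set.Icc (0 : ℝ) 1, ∀ β ∈ Set.Icc (0 : ℝ) 1,
      s α = s β ∨ 1 ≤ |s α - s β|}

/-!
Push the uniform distribution on `[0,1]` forward along `x` to a measure `μ` on `[0,L]`. Then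
`x` is a fixed point iff almost every opinion `t` is the `μ`-mean of its open unit
neighbourhood, i.e. has zero drift. If `m` is the least point of the support above a
`μ`-null gap `(m-1, m)`, then for agents at `t ∈ [m, m+ε)` nothing lies below `m`, so zero
drift forces `δ · μ[m+δ, m+1) ≤ ε · μ(ℝ)`; letting `ε → 0` shows `(m, m+1)` is null, which
opens a new gap below `m+1`. Repeating at most `⌈L⌉ + 1` times exhausts `[0,L]` by finitely
many atoms at mutual distance at least `1`.
-/

open Set Filter Topology

namespace Krause

noncomputable def drift (μ : Measure ℝ) (t : ℝ) : ℝ :=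
  ∫ y in Ioo (t - 1) (t + 1), (y - t) ∂μ

/-- Almost every point has zero drift, phrased without measurability of `drift μ`. -/
def IsStationary (μ : Measure ℝ) : Prop :=
  ∀ s, MeasurableSet s → μ s ≠ 0 → ∃ t ∈ s, drift μ t = 0

section

variable {μ : Measure ℝ}

theorem exists_measure_Ico_eq_zero_forall_measure_Ico_ne_zero {c : ℝ} (hc : μ (Ici c) ≠ 0) :
    ∃ m, c ≤ m ∧ μ (Ico c m) = 0 ∧ ∀ δ > 0, μ (Ico m (m + δ)) ≠ 0 := by
  set T := {t | μ (Icc c t) ≠ 0}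
  have hT : T.Nonempty := by
    have hcover : Ici c ⊆ ⋃ n : ℕ, Icc c (c + n) := fun y hy =>
      mem_iUnion.2 ⟨⌈y - c⌉₊, hy, by linarith [Nat.le_ceil (y - c)]⟩
    by_contra! h
    exact hc (measure_mono_null hcover (measure_iUnion_null fun n =>
      not_not.1 (eq_empty_iff_forall_notMem.1 h _)))
  have hTc : c ∈ lowerBounds T := fun t ht => by
    by_contra! h
    exact ht (by rw [Icc_eq_empty (not_le.2 h), measure_empty])
  have hbelow : μ (Ico c (sInf T)) = 0 := by
    have hcover : Ico c (sInf T) ⊆ ⋃ n : ℕ, Icc c (sInf T - 1 / (n + 1)) := fun y hy => by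
      obtain ⟨n, hn⟩ := exists_nat_one_div_lt (sub_pos.2 hy.2)
      exact mem_iUnion.2 ⟨n, hy.1, by linarith⟩
    refine measure_mono_null hcover (measure_iUnion_null fun n => not_not.1 fun hn => ?_)
    have := csInf_le ⟨c, hTc⟩ hn
    linarith [show (0 : ℝ) < 1 / (n + 1) by positivity]
  refine ⟨sInf T, le_csInf hT hTc, hbelow, fun δ hδ hzero => ?_⟩
  obtain ⟨t, htT, ht⟩ := exists_lt_of_csInf_lt hT (lt_add_of_pos_right (sInf T) hδ)
  refine htT (measure_mono_null (fun y hy => ?_) (measure_union_null hbelow hzero))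
  rcases lt_or_ge y (sInf T) with h | h
  exacts [Or.inl ⟨hy.1, h⟩, Or.inr ⟨h, hy.2.trans_lt ht⟩]

variable [IsFiniteMeasure μ]

theorem ite_average_eq_self_iff (t : ℝ) :
    (if μ (Ioo (t - 1) (t + 1)) = 0 then t
      else (∫ y in Ioo (t - 1) (t + 1), y ∂μ) / (μ (Ioo (t - 1) (t + 1))).toReal) = t ↔
    drift μ t = 0 := by
  set B := Ioo (t - 1) (t + 1)
  by_cases hB : μ B = 0
  · simp [hB, drift, B, setIntegral_measure_zero]
  have hid : IntegrableOn (fun y => y) B μ :=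
    continuous_id.integrableOn_Icc.mono_set Ioo_subset_Icc_self
  have hB' : μ.real B ≠ 0 := by simpa [measureReal_eq_zero_iff] using hB
  rw [if_neg hB, drift, integral_sub hid (integrableOn_const (measure_ne_top μ B)),
    setIntegral_const, smul_eq_mul, ← measureReal_def, div_eq_iff hB', sub_eq_zero, mul_comm]

theorem mul_measureReal_Ico_le_of_drift_eq_zero {m t ε δ : ℝ} (hgap : μ (Ioo (m - 1) m) = 0)
    (ht : t ∈ Ico m (m + ε)) (hε : ε ≤ 1) (hdrift : drift μ t = 0) (hδ : 0 ≤ δ) :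
    δ * μ.real (Ico (m + δ) (m + 1)) ≤ ε * μ.real univ := by
  set B := Ioo (t - 1) (t + 1)
  set S := Ico (m + δ) (m + 1)
  obtain ⟨hmt, htε⟩ := ht
  have hSB : S ⊆ B := fun y hy => ⟨by linarith [hy.1], by linarith [hy.2]⟩
  have hlower : ∀ᵐ y ∂μ.restrict B, -ε + S.indicator (fun _ => δ) y ≤ y - t := by
    filter_upwards [ae_restrict_mem measurableSet_Ioo,
      ae_restrict_of_ae (measure_eq_zero_iff_ae_notMem.1 hgap)] with y hyB hygap
    have hmy : m ≤ y := by
      by_contra! h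
      exact hygap ⟨by linarith [hyB.1], h⟩
    by_cases hyS : y ∈ S
    · rw [indicator_of_mem hyS]
      linarith [hyS.1]
    · rw [indicator_of_notMem hyS]
      linarith
  have hint := integral_mono_ae (f := fun y => -ε + S.indicator (fun _ => δ) y)
    (g := fun y => y - t) ((integrable_const _).add
      ((integrable_const δ).indicator measurableSet_Ico))
    ((continuous_id.integrableOn_Icc.mono_set Ioo_subset_Icc_self).sub (integrable_const t))
    hlower
  rw [integral_add (integrable_const _) ((integrable_const δ).indicator measurableSet_Ico),
    integral_indicator_const _ measurableSet_Ico, integral_const, ← drift, hdrift,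
    measureReal_restrict_apply measurableSet_Ico, inter_eq_left.2 hSB] at hint
  simp only [measureReal_restrict_apply_univ, smul_eq_mul] at hint
  have hε₀ : 0 ≤ ε := by linarith
  linarith [mul_le_mul_of_nonneg_left (measureReal_mono (μ := μ) (subset_univ B)) hε₀]

theorem measure_Ioo_eq_zero_of_isStationary (hμ : IsStationary μ) {m : ℝ}
    (hm : ∀ δ > 0, μ (Ico m (m + δ)) ≠ 0) (hgap : μ (Ioo (m - 1) m) = 0) :
    μ (Ioo m (m + 1)) = 0 := by
  have hslice : ∀ δ > 0, μ (Ico (m + δ) (m + 1)) = 0 := by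
    intro δ hδ
    have hbound : ∀ ε ∈ Ioo (0 : ℝ) 1,
        δ * μ.real (Ico (m + δ) (m + 1)) ≤ ε * μ.real univ := by
      rintro ε ⟨hε₀, hε₁⟩
      obtain ⟨t, ht, hdrift⟩ := hμ _ measurableSet_Ico (hm ε hε₀)
      exact mul_measureReal_Ico_le_of_drift_eq_zero hgap ht hε₁.le hdrift hδ.le
    have hlim : Tendsto (fun ε => ε * μ.real univ) (𝓝[>] 0) (𝓝 0) :=
      ((continuous_mul_const _).tendsto' 0 0 (zero_mul _)).mono_left nhdsWithin_le_nhds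
    have hle := ge_of_tendsto hlim (mem_of_superset (Ioo_mem_nhdsGT one_pos) hbound)
    rw [← measureReal_eq_zero_iff]
    exact le_antisymm (nonpos_of_mul_nonpos_right hle hδ) measureReal_nonneg
  have hcover : Ioo m (m + 1) ⊆ ⋃ n : ℕ, Ico (m + 1 / (n + 1)) (m + 1) := by
    intro y hy
    obtain ⟨n, hn⟩ := exists_nat_one_div_lt (sub_pos.2 hy.1)
    exact mem_iUnion.2 ⟨n, by linarith, hy.2⟩
  exact measure_mono_null hcover (measure_iUnion_null fun n => hslice _ (by positivity))

theorem exists_finset_of_isStationary_of_measure_Ioo_eq_zero (hμ : IsStationary μ) {L : ℝ}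
    (htop : μ (Ioi L) = 0) (n : ℕ) {c : ℝ} (hn : L < c + n) (hgap : μ (Ioo (c - 1) c) = 0) :
    ∃ D : Finset ℝ, (∀ a ∈ D, c ≤ a) ∧ (D : Set ℝ).Pairwise (fun a b => 1 ≤ |a - b|) ∧
      μ (Ici c \ D) = 0 := by
  induction n generalizing c with
  | zero =>
    refine ⟨∅, by simp, by simp, ?_⟩
    simp only [Finset.coe_empty, sdiff_empty]
    exact measure_mono_null (fun y hy => by simp at hn; exact hn.trans_le hy) htop
  | succ n ih =>
    by_cases hc : μ (Ici c) = 0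
    · exact ⟨∅, by simp, by simp, by simpa using hc⟩
    obtain ⟨m, hcm, hbelow, hm⟩ := exists_measure_Ico_eq_zero_forall_measure_Ico_ne_zero hc
    have hmgap : μ (Ioo (m - 1) m) = 0 := by
      refine measure_mono_null (fun y hy => ?_) (measure_union_null hgap hbelow)
      rcases lt_or_ge y c with h | h
      exacts [Or.inl ⟨by linarith [hy.1], h⟩, Or.inr ⟨h, hy.2⟩]
    have hcluster := measure_Ioo_eq_zero_of_isStationary hμ hm hmgap
    obtain ⟨D, hDm, hDsep, hDnull⟩ := ih (c := m + 1) (by push_cast at hn; linarith)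
      (by rwa [add_sub_cancel_right])
    refine ⟨insert m D, ?_, ?_, ?_⟩
    · simp only [Finset.mem_insert, forall_eq_or_imp]
      exact ⟨hcm, fun a ha => by linarith [hDm a ha]⟩
    · rw [Finset.coe_insert, pairwise_insert]
      refine ⟨hDsep, fun b hb _ => ?_⟩
      have hb := hDm b hb
      rw [abs_sub_comm b, abs_of_nonpos (by linarith)]
      constructor <;> linarith
    · refine measure_mono_null (fun y ⟨hy, hyD⟩ => ?_)
        (measure_union_null hbelow (measure_union_null hcluster hDnull))
      simp only [Finset.coe_insert, mem_insert_iff, Finset.mem_coe, not_or] at hyD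
      rcases lt_or_ge y m with h | h
      · exact Or.inl ⟨hy, h⟩
      rcases lt_or_ge y (m + 1) with h' | h'
      exacts [Or.inr (Or.inl ⟨lt_of_le_of_ne h (Ne.symm hyD.1), h'⟩), Or.inr (Or.inr ⟨h', hyD.2⟩)]

theorem exists_finset_of_isStationary (hμ : IsStationary μ) {L : ℝ}
    (hsupp : μ (Icc 0 L)ᶜ = 0) :
    ∃ D : Finset ℝ, (D : Set ℝ).Pairwise (fun a b => 1 ≤ |a - b|) ∧ μ (D : Set ℝ)ᶜ = 0 := by
  have hbot : μ (Iio 0) = 0 := measure_mono_null (fun _ hy => notMem_Icc_of_lt hy) hsupp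
  obtain ⟨D, -, hDsep, hDnull⟩ := exists_finset_of_isStationary_of_measure_Ioo_eq_zero hμ
    (measure_mono_null (fun _ hy => notMem_Icc_of_gt hy) hsupp) (⌈L⌉₊ + 1) (c := 0)
    (by push_cast; linarith [Nat.le_ceil L]) (measure_mono_null (fun y hy => hy.2) hbot)
  refine ⟨D, hDsep, measure_mono_null (fun y hy => ?_) (measure_union_null hbot hDnull)⟩
  rcases lt_or_ge y 0 with h | h
  exacts [Or.inl h, Or.inr ⟨h, hy⟩]

end

theorem isStationary_map {α : Type*} [MeasurableSpace α] {ν : Measure α} {f : α → ℝ}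
    (hf : Measurable f) (h : ∀ᵐ a ∂ν, drift (ν.map f) (f a) = 0) : IsStationary (ν.map f) := by
  intro s hs hνs
  rw [Measure.map_apply hf hs] at hνs
  obtain ⟨a, ha, hdrift⟩ := Measure.exists_mem_of_measure_ne_zero_of_ae hνs (ae_restrict_of_ae h)
  exact ⟨f a, ha, hdrift⟩

theorem setOf_mem_Icc_abs_sub_lt_one (x : ℝ → ℝ) (t : ℝ) :
    {β ∈ Icc (0 : ℝ) 1 | |t - x β| < 1} = x ⁻¹' Ioo (t - 1) (t + 1) ∩ Icc 0 1 := by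
  ext β
  simp only [mem_sep_iff, mem_inter_iff, mem_preimage, mem_Ioo, abs_sub_lt_iff]
  exact ⟨fun ⟨hβ, h₁, h₂⟩ => ⟨⟨by linarith, by linarith⟩, hβ⟩,
    fun ⟨⟨h₁, h₂⟩, hβ⟩ => ⟨hβ, by linarith, by linarith⟩⟩

theorem uop_eq_self_iff {x : ℝ → ℝ} (hx : Measurable x) (α : ℝ) :
    Uop x α = x α ↔ drift ((volume.restrict (Icc 0 1)).map x) (x α) = 0 := by
  rw [← ite_average_eq_self_iff, Uop, setOf_mem_Icc_abs_sub_lt_one,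
    Measure.map_apply hx measurableSet_Ioo, Measure.restrict_apply (hx measurableSet_Ioo),
    setIntegral_map (f := fun y => y) measurableSet_Ioo aestronglyMeasurable_id hx.aemeasurable,
    Measure.restrict_restrict (hx measurableSet_Ioo)]

theorem drift_map_eq_zero_of_mem_Fset {L : ℝ} {s : ℝ → ℝ} (hs : s ∈ Fset L) {α : ℝ}
    (hα : α ∈ Icc 0 1) : drift ((volume.restrict (Icc 0 1)).map s) (s α) = 0 := by
  obtain ⟨hsm, -, hsep⟩ := hs
  rw [drift, setIntegral_map measurableSet_Ioo (by fun_prop) hsm.aemeasurable]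
  refine integral_eq_zero_of_ae ?_
  filter_upwards [ae_restrict_mem (hsm measurableSet_Ioo),
    ae_restrict_of_ae (ae_restrict_mem measurableSet_Icc)] with β hβ hβI
  rcases hsep α hα β hβI with h | h
  · simp [h]
  · rw [mem_preimage, mem_Ioo] at hβ
    exact absurd h (not_le.2 (abs_sub_lt_iff.2 ⟨by linarith [hβ.1], by linarith [hβ.2]⟩))

theorem exists_mem_Fset_ae_eq {L : ℝ} {x : ℝ → ℝ} (hx : Measurable x)
    (hrange : ∀ α ∈ Icc (0 : ℝ) 1, x α ∈ Icc 0 L) (D : Finset ℝ)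
    (hD : (D : Set ℝ).Pairwise (fun a b => 1 ≤ |a - b|))
    (hae : ∀ᵐ α ∂volume.restrict (Icc 0 1), x α ∈ D) :
    ∃ s ∈ Fset L, ∀ᵐ α ∂volume.restrict (Icc 0 1), x α = s α := by
  have : (ae (volume.restrict (Icc (0 : ℝ) 1))).NeBot := ae_neBot.2 (by simp [Real.volume_Icc])
  obtain ⟨α₀, hα₀, hα₀I⟩ := (hae.and (ae_restrict_mem measurableSet_Icc)).exists
  set s := fun α => if x α ∈ D then x α else x α₀
  have hsD : ∀ α, s α ∈ D := fun α => by by_cases h : x α ∈ D <;> simp [s, h, hα₀]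
  refine ⟨s, ⟨?_, fun α hα => ?_, fun α _ β _ => ?_⟩, ?_⟩
  · exact Measurable.ite (hx D.measurableSet) hx measurable_const
  · by_cases h : x α ∈ D <;> simp only [s, h, if_true, if_false]
    exacts [hrange α hα, hrange α₀ hα₀I]
  · by_cases h : s α = s β
    exacts [Or.inl h, Or.inr (hD (hsD α) (hsD β) h)]
  · filter_upwards [hae] with α hα
    simp [s, hα]

end Krause

theorem krause_continuum_fixed_point_iff_general (L : ℝ) (x : ℝ → ℝ)
    (hx : Measurable x) (hrange : ∀ α ∈ Set.Icc (0 : ℝ) 1, x α ∈ Set.Icc (0 : ℝ) L) :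
    (∀ᵐ α ∂(volume.restrict (Set.Icc (0 : ℝ) 1)), Uop x α = x α) ↔
    ∃ s ∈ Fset L, ∀ᵐ α ∂(volume.restrict (Set.Icc (0 : ℝ) 1)), x α = s α := by
  set ν := volume.restrict (Set.Icc (0 : ℝ) 1)
  simp_rw [Krause.uop_eq_self_iff hx]
  constructor
  · intro hfix
    have hsupp : ν.map x (Icc 0 L)ᶜ = 0 := mem_ae_iff.1 <|
      (ae_map_iff hx.aemeasurable measurableSet_Icc).2
        (ae_restrict_of_forall_mem measurableSet_Icc hrange)
    obtain ⟨D, hDsep, hDnull⟩ :=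
      Krause.exists_finset_of_isStationary (Krause.isStationary_map hx hfix) hsupp
    exact Krause.exists_mem_Fset_ae_eq hx hrange D hDsep
      ((ae_map_iff hx.aemeasurable D.measurableSet).1 (mem_ae_iff.2 hDnull))
  · rintro ⟨s, hs, hxs⟩
    rw [Measure.map_congr hxs]
    filter_upwards [hxs, ae_restrict_mem measurableSet_Icc] with α hα hαI
    rw [hα]
    exact Krause.drift_map_eq_zero_of_mem_Fset hs hαI

/-- `x ∈ X_L` is a fixed point of the continuous-agent Krause
model (i.e. `U(x) = x` almost everywhere on `[0,1]`) if and only if `x` agrees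
almost everywhere on `[0,1]` with some element of `F`. -/
theorem krause_continuum_fixed_point_iff (L : ℝ) (hL : 0 < L) (x : ℝ → ℝ)
    (hx : Measurable x) (hrange : ∀ α ∈ Set.Icc (0 : ℝ) 1, x α ∈ Set.Icc (0 : ℝ) L) :
    (∀ᵐ α ∂(volume.restrict (Set.Icc (0 : ℝ) 1)), Uop x α = x α) ↔
    ∃ s ∈ Fset L, ∀ᵐ α ∂(volume.restrict (Set.Icc (0 : ℝ) 1)), x α = s α :=
  krause_continuum_fixed_point_iff_general L x hx hrange
end

section
/- Let L > 0 and let s ∈ F be a fixed point of the continuous-agent Krause model. Suppose s is stable. Then for any two distinct values a, b taken by s with μ_s({a}) > 0 and μ_s({b}) > 0, one has |b − a| ≥ 1 + min(μ_s({a}), μ_s({b})) / max(μ_s({a}), μ_s({b})). -/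
/-!
Let `a < b` carry masses `A, B > 0` and suppose `b - a < 1 + min A B / max A B`, i.e. both
`A (b - a)` and `B (b - a)` are `< A + B`. Move a small mass `w` of the `a`-cluster to the
barycentre `(A a + B b) / (A + B)`, which lies within distance `1` of both `a` and `b`. On such
step profiles the continuum model is the weighted three-cluster Krause model. While the outer
clusters are at least `1` apart, the middle one jumps to the overall barycentre, stays within `1`
of both, and drags the `a`-cluster towards `b` by at least `w B / (2 A (A + B))` per step. So the
outer clusters eventually see each other and merge, which displaces the `a`-cluster (of mass at
least `A / 2`) by at least `B ^ 2 / (2 (A + B) ^ 2)`, independently of `w`, contradicting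
stability.
-/

open MeasureTheory

/-- `μ_s({a})`: the measure of the set of agents whose opinion is `a`. -/
noncomputable def muPoint (s : ℝ → ℝ) (a : ℝ) : ℝ :=
  (volume {α ∈ Set.Icc (0 : ℝ) 1 | s α = a}).toReal

/-- Stability of a fixed point `s` of the continuous-agent Krause model: for
every `ε > 0` there is `δ > 0` such that every trajectory starting `<_μ δ`
close to `s` stays `<_μ ε` close to `s` for all times. -/
def IsStableC (L : ℝ) (s : ℝ → ℝ) : Prop :=
  ∀ ε > (0 : ℝ), ∃ δ > (0 : ℝ), ∀ x : ℕ → ℝ → ℝ, IsKrauseTraj L x →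
    volume {α ∈ Set.Icc (0 : ℝ) 1 | δ ≤ |x 0 α - s α|} < ENNReal.ofReal δ →
    ∀ t : ℕ,
      volume {α ∈ Set.Icc (0 : ℝ) 1 | ε ≤ |x t α - s α|} < ENNReal.ofReal ε


open Set Function

def confidenceSet (x : ℝ → ℝ) (v : ℝ) : Set ℝ :=
  {β ∈ Icc (0 : ℝ) 1 | |v - x β| < 1}

noncomputable def krauseAvg (x : ℝ → ℝ) (v : ℝ) : ℝ :=
  if volume (confidenceSet x v) = 0 then v
  else (∫ β in confidenceSet x v, x β) / (volume (confidenceSet x v)).toReal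

theorem isKrauseTraj_iff {L : ℝ} {x : ℕ → ℝ → ℝ} :
    IsKrauseTraj L x ↔ (∀ t, Measurable (x t)) ∧
      (∀ t, ∀ α ∈ Icc (0 : ℝ) 1, x t α ∈ Icc (0 : ℝ) L) ∧
      ∀ t, ∀ α ∈ Icc (0 : ℝ) 1, x (t + 1) α = krauseAvg (x t) (x t α) :=
  Iff.rfl

theorem measurableSet_confidenceSet {x : ℝ → ℝ} (hx : Measurable x) (v : ℝ) :
    MeasurableSet (confidenceSet x v) :=
  measurableSet_Icc.inter (measurableSet_lt (measurable_const.sub hx).abs measurable_const)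

theorem krauseAvg_eq_self {x : ℝ → ℝ} {v : ℝ} (hx : Measurable x)
    (h : ∀ β ∈ confidenceSet x v, x β = v) : krauseAvg x v = v := by
  rw [krauseAvg]
  split_ifs with h0
  · rfl
  · rw [setIntegral_congr_fun (measurableSet_confidenceSet hx v) h, setIntegral_const,
      smul_eq_mul, measureReal_def, mul_div_cancel_left₀]
    exact ENNReal.toReal_ne_zero.2
      ⟨h0, measure_ne_top_of_subset (fun β hβ => hβ.1) measure_Icc_lt_top.ne⟩

section ClusterStep

variable {ι : Type*} [Fintype ι]

noncomputable def clusterStep (m y : ι → ℝ) (i : ι) : ℝ :=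
  (∑ j with |y i - y j| < 1, m j * y j) / ∑ j with |y i - y j| < 1, m j

theorem clusterStep_of_forall_lt {m y : ι → ℝ} {i : ι} (h : ∀ j, |y i - y j| < 1) :
    clusterStep m y i = (∑ j, m j * y j) / ∑ j, m j := by
  simp only [clusterStep, Finset.filter_true_of_mem fun j _ => h j]

theorem clusterStep_fin_three_of_far (m y : Fin 3 → ℝ) (h01 : |y 0 - y 1| < 1)
    (h12 : |y 1 - y 2| < 1) (h02 : 1 ≤ |y 0 - y 2|) :
    clusterStep m y 0 = (m 0 * y 0 + m 1 * y 1) / (m 0 + m 1) ∧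
      clusterStep m y 1 = (m 0 * y 0 + m 1 * y 1 + m 2 * y 2) / (m 0 + m 1 + m 2) ∧
      clusterStep m y 2 = (m 1 * y 1 + m 2 * y 2) / (m 1 + m 2) := by
  have h10 : |y 1 - y 0| < 1 := by rwa [abs_sub_comm]
  have h21 : |y 2 - y 1| < 1 := by rwa [abs_sub_comm]
  have h20 : ¬|y 2 - y 0| < 1 := by rw [abs_sub_comm]; exact not_lt.2 h02
  simp [clusterStep, Finset.sum_filter, Fin.sum_univ_three, h01, h10, h12, h21, h20,
    not_lt.2 h02]

end ClusterStep

/-- For pairwise disjoint `E`, the profile equal to `y i` on `E i` and to `s` elsewhere. -/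
noncomputable def clusterProfile {ι : Type*} [Fintype ι] (s : ℝ → ℝ) (E : ι → Set ℝ)
    (y : ι → ℝ) (α : ℝ) : ℝ :=
  s α + ∑ i, (E i).indicator (fun β => y i - s β) α

section ClusterProfile

variable {ι : Type*} [Fintype ι] {s : ℝ → ℝ} {E : ι → Set ℝ} {y m : ι → ℝ}

theorem clusterProfile_of_mem (hE : Pairwise (Disjoint on E)) {i : ι} {α : ℝ}
    (hα : α ∈ E i) :
    clusterProfile s E y α = y i := by
  rw [clusterProfile, Finset.sum_eq_single i, indicator_of_mem hα, add_sub_cancel]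
  · exact fun j _ hji => indicator_of_notMem (fun hαj => (hE hji).le_bot ⟨hαj, hα⟩) _
  · simp

theorem clusterProfile_of_forall_notMem {α : ℝ} (hα : ∀ i, α ∉ E i) :
    clusterProfile s E y α = s α := by
  simp [clusterProfile, indicator_of_notMem (hα _)]

theorem measurable_clusterProfile (hs : Measurable s) (hE : ∀ i, MeasurableSet (E i)) :
    Measurable (clusterProfile s E y) :=
  hs.add (Finset.measurable_sum _ fun i _ => (measurable_const.sub hs).indicator (hE i))

theorem confidenceSet_clusterProfile (hE : Pairwise (Disjoint on E))
    (hEsub : ∀ j, E j ⊆ Icc 0 1) {i : ι}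
    (hfar : ∀ β ∈ Icc (0 : ℝ) 1, (∀ j, β ∉ E j) → 1 ≤ |y i - s β|) :
    confidenceSet (clusterProfile s E y) (y i) =
      ⋃ j ∈ Finset.univ.filter (fun j => |y i - y j| < 1), E j := by
  ext β
  simp only [confidenceSet, mem_ofPred_eq, mem_iUnion, Finset.mem_filter_univ, exists_prop]
  constructor
  · rintro ⟨hβ, hlt⟩
    by_cases hβE : ∃ j, β ∈ E j
    · obtain ⟨j, hj⟩ := hβE
      exact ⟨j, by rwa [clusterProfile_of_mem hE hj] at hlt, hj⟩
    · push Not at hβE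
      rw [clusterProfile_of_forall_notMem hβE] at hlt
      exact absurd (hfar β hβ hβE) (not_le.2 hlt)
  · rintro ⟨j, hlt, hj⟩
    exact ⟨hEsub j hj, by rwa [clusterProfile_of_mem hE hj]⟩

theorem krauseAvg_clusterProfile (hE : Pairwise (Disjoint on E))
    (hEm : ∀ j, MeasurableSet (E j)) (hEsub : ∀ j, E j ⊆ Icc 0 1)
    (hm : ∀ j, volume.real (E j) = m j) {i : ι} (hmi : 0 < m i)
    (hfar : ∀ β ∈ Icc (0 : ℝ) 1, (∀ j, β ∉ E j) → 1 ≤ |y i - s β|) :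
    krauseAvg (clusterProfile s E y) (y i) = clusterStep m y i := by
  have hfin : ∀ j, volume (E j) ≠ ⊤ := fun j =>
    measure_ne_top_of_subset (hEsub j) measure_Icc_lt_top.ne
  have hN := confidenceSet_clusterProfile (y := y) hE hEsub hfar
  have hvol : volume.real (confidenceSet (clusterProfile s E y) (y i)) =
      ∑ j with |y i - y j| < 1, m j := by
    rw [hN, measureReal_biUnion_finset (fun j _ k _ hjk => hE hjk) (fun j _ => hEm j)
      (fun j _ => hfin j)]
    simp only [hm]
  have hint : ∫ β in confidenceSet (clusterProfile s E y) (y i), clusterProfile s E y β =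
      ∑ j with |y i - y j| < 1, m j * y j := by
    rw [hN, integral_biUnion_finset _ (fun j _ => hEm j) (fun j _ k _ hjk => hE hjk)]
    · refine Finset.sum_congr rfl fun j _ => ?_
      rw [setIntegral_congr_fun (hEm j) (fun β hβ => clusterProfile_of_mem hE hβ),
        setIntegral_const, hm, smul_eq_mul]
    · exact fun j _ => (integrableOn_congr_fun (fun β hβ => clusterProfile_of_mem hE hβ)
        (hEm j)).2 (integrableOn_const (hfin j))
  have hpos : 0 < volume.real (confidenceSet (clusterProfile s E y) (y i)) := by
    rw [hvol]
    exact hmi.trans_le (Finset.single_le_sum (fun j _ => hm j ▸ measureReal_nonneg) (by simp))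
  rw [krauseAvg, if_neg (fun h0 => by simp [measureReal_def, h0] at hpos), hint,
    ← measureReal_def, hvol, clusterStep]

theorem isKrauseTraj_clusterProfile {L : ℝ} (hs : s ∈ Fset L) {Y : ℕ → ι → ℝ}
    (hE : Pairwise (Disjoint on E)) (hEm : ∀ j, MeasurableSet (E j))
    (hEsub : ∀ j, E j ⊆ Icc 0 1) (hm : ∀ j, volume.real (E j) = m j) (hm0 : ∀ j, 0 < m j)
    (hY : ∀ t, Y (t + 1) = clusterStep m (Y t)) (hYL : ∀ t j, Y t j ∈ Icc 0 L)
    (hfar : ∀ t j, ∀ β ∈ Icc (0 : ℝ) 1, (∀ k, β ∉ E k) → 1 ≤ |Y t j - s β|) :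
    IsKrauseTraj L (fun t => clusterProfile s E (Y t)) := by
  refine isKrauseTraj_iff.2 ⟨fun t => measurable_clusterProfile hs.1 hEm, fun t α hα => ?_,
    fun t α hα => ?_⟩
  · by_cases hαE : ∃ j, α ∈ E j
    · obtain ⟨j, hj⟩ := hαE
      rw [clusterProfile_of_mem hE hj]
      exact hYL t j
    · push Not at hαE
      rw [clusterProfile_of_forall_notMem hαE]
      exact hs.2.1 α hα
  · by_cases hαE : ∃ j, α ∈ E j
    · obtain ⟨j, hj⟩ := hαE
      simp only [clusterProfile_of_mem hE hj, hY]
      exact (krauseAvg_clusterProfile hE hEm hEsub hm (hm0 j) (hfar t j)).symm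
    · push Not at hαE
      simp only [clusterProfile_of_forall_notMem hαE]
      refine (krauseAvg_eq_self (measurable_clusterProfile hs.1 hEm) fun β hβ => ?_).symm
      by_cases hβE : ∃ k, β ∈ E k
      · obtain ⟨k, hk⟩ := hβE
        rw [confidenceSet, mem_ofPred_eq, clusterProfile_of_mem hE hk, abs_sub_comm] at hβ
        exact absurd (hfar t k α hα hαE) (not_le.2 hβ.2)
      · push Not at hβE
        rw [confidenceSet, mem_ofPred_eq, clusterProfile_of_forall_notMem hβE] at hβ
        rw [clusterProfile_of_forall_notMem hβE]
        exact ((hs.2.2 α hα β hβ.1).resolve_right (not_le.2 hβ.2)).symm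

end ClusterProfile

theorem pairwise_disjoint_on_sdiff_three {α : Type*} {S C T : Set α} (hCS : C ⊆ S)
    (hST : Disjoint S T) : Pairwise (Disjoint on ![S \ C, C, T]) := by
  have h01 : Disjoint (S \ C) C := disjoint_sdiff_left
  have h02 : Disjoint (S \ C) T := hST.mono_left sdiff_subset
  have h12 : Disjoint C T := hST.mono_left hCS
  intro i j hij
  fin_cases i <;> fin_cases j <;>
    simp [onFun, h01, h02, h12, h01.symm, h02.symm, h12.symm] at hij ⊢

theorem exists_subset_measureReal_eq {S : Set ℝ} {u v w : ℝ} (hS : MeasurableSet S)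
    (hSuv : S ⊆ Icc u v) (hw0 : 0 ≤ w) (hw : w ≤ volume.real S) :
    ∃ C ⊆ S, MeasurableSet C ∧ volume.real C = w := by
  set f : ℝ → ℝ := fun z => volume.real (S ∩ Iic z)
  have hfin : ∀ z, volume (S ∩ Iic z) ≠ ⊤ := fun z =>
    measure_ne_top_of_subset (inter_subset_left.trans hSuv) measure_Icc_lt_top.ne
  have hf_le : ∀ z z', z ≤ z' → f z ≤ f z' ∧ f z' ≤ f z + (z' - z) := by
    intro z z' hzz'
    refine ⟨measureReal_mono (inter_subset_inter_right _ (Iic_subset_Iic.2 hzz')) (hfin z'), ?_⟩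
    have hcover : S ∩ Iic z' ⊆ (S ∩ Iic z) ∪ Ioc z z' := fun β ⟨hβS, hβz'⟩ =>
      (le_or_gt β z).imp (fun h => ⟨hβS, h⟩) (fun h => ⟨h, hβz'⟩)
    calc f z' ≤ volume.real ((S ∩ Iic z) ∪ Ioc z z') :=
          measureReal_mono hcover (measure_union_ne_top (hfin z) measure_Ioc_lt_top.ne)
      _ ≤ f z + volume.real (Ioc z z') := measureReal_union_le _ _
      _ = f z + (z' - z) := by rw [Real.volume_real_Ioc_of_le hzz']
  have hf_cont : Continuous f := by
    refine (LipschitzWith.of_le_add fun z z' => ?_).continuous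
    rw [Real.dist_eq]
    rcases le_total z z' with h | h
    · linarith [(hf_le z z' h).1, abs_nonneg (z - z')]
    · linarith [(hf_le z' z h).2, le_abs_self (z - z')]
  have hfu : f u = 0 := (measureReal_eq_zero_iff (hfin u)).2 <|
    measure_mono_null (fun β ⟨hβS, hβu⟩ => le_antisymm hβu (hSuv hβS).1)
      (measure_singleton u)
  have hfv : f (max u v) = volume.real S := by
    simp only [f, inter_eq_left.2 fun β hβ => Iic_subset_Iic.2 (le_max_right u v) (hSuv hβ).2]
  obtain ⟨z, -, hz⟩ := intermediate_value_Icc (le_max_left u v) hf_cont.continuousOn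
    (show w ∈ Icc (f u) (f (max u v)) from ⟨hfu ▸ hw0, hfv ▸ hw⟩)
  exact ⟨S ∩ Iic z, inter_subset_left, hS.inter measurableSet_Iic, hz⟩

/-- Invariant of the three-cluster dynamics with masses `A - w, w, B`; the gap bounds are the
gaps of the initial configuration `a, (A a + B b) / (A + B), b`. -/
def IsBracketed (A B a b : ℝ) (y : Fin 3 → ℝ) : Prop :=
  a ≤ y 0 ∧ y 0 ≤ y 1 ∧ y 1 ≤ y 2 ∧ y 2 ≤ b ∧
    (A + B) * (y 1 - y 0) ≤ B * (b - a) ∧ (A + B) * (y 2 - y 1) ≤ A * (b - a)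

section ThreeClusters

variable {A B w a b : ℝ} {y : Fin 3 → ℝ}

theorem IsBracketed.mem_Icc (hy : IsBracketed A B a b y) (j : Fin 3) : y j ∈ Icc a b := by
  obtain ⟨ha0, h01, h12, h2b, -, -⟩ := hy
  fin_cases j <;> constructor <;> simp <;> linarith

theorem IsBracketed.sub_lt_one (hAB : 0 < A + B) (hAd : A * (b - a) < A + B)
    (hBd : B * (b - a) < A + B) (hy : IsBracketed A B a b y) :
    y 1 - y 0 < 1 ∧ y 2 - y 1 < 1 := by
  obtain ⟨-, -, -, -, hg01, hg12⟩ := hy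
  constructor <;> nlinarith

theorem clusterStep_fin_three_of_sub_lt_one (hAB : A + B ≠ 0) (hy : IsBracketed A B a b y)
    (hmerge : y 2 - y 0 < 1) (i : Fin 3) :
    (A + B) * clusterStep ![A - w, w, B] y i = (A - w) * y 0 + w * y 1 + B * y 2 := by
  have hclose : ∀ j k : Fin 3, |y j - y k| < 1 := by
    intro j k
    obtain ⟨-, h01, h12, -⟩ := hy
    have hle : ∀ j, y 0 ≤ y j ∧ y j ≤ y 2 := by
      intro j; fin_cases j <;> constructor <;> simp <;> linarith
    rw [abs_sub_lt_iff]
    constructor <;> linarith [hle j, hle k]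
  rw [clusterStep_of_forall_lt (hclose i), Fin.sum_univ_three, Fin.sum_univ_three]
  simp only [Matrix.cons_val_zero, Matrix.cons_val_one, Matrix.cons_val_two, Matrix.head_cons,
    Matrix.tail_cons]
  rw [show A - w + w + B = A + B by ring, mul_div_cancel₀ _ hAB]

theorem clusterStep_fin_three_of_one_le (hA : 0 < A) (hB : 0 < B) (hw : 0 < w)
    (hAd : A * (b - a) < A + B) (hBd : B * (b - a) < A + B) (hy : IsBracketed A B a b y)
    (hsep : 1 ≤ y 2 - y 0) :
    A * clusterStep ![A - w, w, B] y 0 = (A - w) * y 0 + w * y 1 ∧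
      (A + B) * clusterStep ![A - w, w, B] y 1 = (A - w) * y 0 + w * y 1 + B * y 2 ∧
      (w + B) * clusterStep ![A - w, w, B] y 2 = w * y 1 + B * y 2 := by
  obtain ⟨d01, d12⟩ := hy.sub_lt_one (by positivity) hAd hBd
  obtain ⟨-, h01, h12, -⟩ := hy
  have h01' : |y 0 - y 1| < 1 := by rwa [abs_sub_comm, abs_of_nonneg (by linarith)]
  have h12' : |y 1 - y 2| < 1 := by rwa [abs_sub_comm, abs_of_nonneg (by linarith)]
  have h02' : 1 ≤ |y 0 - y 2| := by rwa [abs_sub_comm, abs_of_nonneg (by linarith)]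
  obtain ⟨e0, e1, e2⟩ := clusterStep_fin_three_of_far ![A - w, w, B] y h01' h12' h02'
  simp only [Matrix.cons_val_zero, Matrix.cons_val_one, Matrix.cons_val_two, Matrix.head_cons,
    Matrix.tail_cons] at e0 e1 e2
  rw [e0, e1, e2, show A - w + w = A by ring]
  exact ⟨mul_div_cancel₀ _ hA.ne', mul_div_cancel₀ _ (by positivity),
    mul_div_cancel₀ _ (by positivity)⟩

theorem isBracketed_clusterStep (hA : 0 < A) (hB : 0 < B) (hw : 0 < w) (hwA : w < A)
    (hAd : A * (b - a) < A + B) (hBd : B * (b - a) < A + B) (hy : IsBracketed A B a b y) :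
    IsBracketed A B a b (clusterStep ![A - w, w, B] y) := by
  set y' := clusterStep ![A - w, w, B] y
  by_cases hmerge : y 2 - y 0 < 1
  · have e := clusterStep_fin_three_of_sub_lt_one (w := w) (by positivity) hy hmerge
    have e0 := e 0
    have e1 := e 1
    have e2 := e 2
    obtain ⟨ha0, h01, h12, h2b, -, -⟩ := hy
    refine ⟨?_, ?_, ?_, ?_, ?_, ?_⟩ <;> nlinarith
  obtain ⟨e0, e1, e2⟩ := clusterStep_fin_three_of_one_le hA hB hw hAd hBd hy (not_lt.1 hmerge)
  obtain ⟨ha0, h01, h12, h2b, -, -⟩ := hy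
  have hgap01 : A * ((A + B) * (y' 1 - y' 0)) = B * (A * (y 2 - y 0) - w * (y 1 - y 0)) := by
    linear_combination A * e1 - (A + B) * e0
  have hgap12 : (w + B) * ((A + B) * (y' 2 - y' 1)) =
      (A - w) * (w * (y 1 - y 0) + B * (y 2 - y 0)) := by
    linear_combination (A + B) * e2 - (w + B) * e1
  have hAB : 0 < A + B := by positivity
  have hwB : 0 < w + B := by positivity
  refine ⟨by nlinarith, ?_, ?_, by nlinarith, ?_, ?_⟩
  · have : 0 ≤ (A + B) * (y' 1 - y' 0) := by
      refine (mul_nonneg_iff_of_pos_left hA).1 (hgap01 ▸ mul_nonneg hB.le ?_)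
      nlinarith
    nlinarith
  · have : 0 ≤ (A + B) * (y' 2 - y' 1) := by
      refine (mul_nonneg_iff_of_pos_left hwB).1 (hgap12 ▸ mul_nonneg (by linarith) ?_)
      nlinarith
    nlinarith
  · refine le_of_mul_le_mul_left ?_ hA
    rw [hgap01]
    nlinarith [mul_nonneg hB.le (mul_nonneg hw.le (sub_nonneg.2 h01)),
      mul_nonneg hA.le (mul_nonneg hB.le (by linarith : 0 ≤ b - a - (y 2 - y 0)))]
  · refine le_of_mul_le_mul_left ?_ hwB
    rw [hgap12]
    nlinarith [mul_nonneg (mul_nonneg (by linarith : 0 ≤ A - w) hw.le) (sub_nonneg.2 h12),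
      mul_nonneg (mul_nonneg hw.le hwB.le) (by linarith : 0 ≤ y 2 - y 0),
      mul_nonneg (mul_nonneg hA.le hwB.le) (by linarith : 0 ≤ b - a - (y 2 - y 0))]

end ThreeClusters

noncomputable def threeClusterOrbit (A B w a b : ℝ) (t : ℕ) : Fin 3 → ℝ :=
  (clusterStep ![A - w, w, B])^[t] ![a, (A * a + B * b) / (A + B), b]

section ThreeClusterOrbit

variable {A B w a b : ℝ}

theorem threeClusterOrbit_zero :
    threeClusterOrbit A B w a b 0 = ![a, (A * a + B * b) / (A + B), b] :=
  rfl

theorem threeClusterOrbit_succ (t : ℕ) :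
    threeClusterOrbit A B w a b (t + 1) =
      clusterStep ![A - w, w, B] (threeClusterOrbit A B w a b t) :=
  iterate_succ_apply' _ _ _

variable (hA : 0 < A) (hB : 0 < B) (hw : 0 < w) (hwA : 2 * w ≤ A) (hab : 1 ≤ b - a)
  (hAd : A * (b - a) < A + B) (hBd : B * (b - a) < A + B)
include hA hB hw hwA hab hAd hBd

theorem isBracketed_threeClusterOrbit (t : ℕ) :
    IsBracketed A B a b (threeClusterOrbit A B w a b t) := by
  induction t with
  | zero =>
    have hc : (A + B) * ((A * a + B * b) / (A + B)) = A * a + B * b :=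
      mul_div_cancel₀ _ (by positivity)
    simp only [threeClusterOrbit_zero, IsBracketed, Matrix.cons_val_zero, Matrix.cons_val_one,
      Matrix.cons_val_two, Matrix.head_cons, Matrix.tail_cons]
    refine ⟨le_rfl, ?_, ?_, le_rfl, ?_, ?_⟩ <;> nlinarith
  | succ t ih =>
    rw [threeClusterOrbit_succ]
    exact isBracketed_clusterStep hA hB hw (by linarith) hAd hBd ih

theorem threeClusterOrbit_gap {t : ℕ}
    (hsep : ∀ k < t, 1 ≤ threeClusterOrbit A B w a b k 2 - threeClusterOrbit A B w a b k 0) :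
    B ≤ 2 * (A + B) * (threeClusterOrbit A B w a b t 1 - threeClusterOrbit A B w a b t 0) := by
  cases t with
  | zero =>
    have hc : (A + B) * ((A * a + B * b) / (A + B)) = A * a + B * b :=
      mul_div_cancel₀ _ (by positivity)
    simp only [threeClusterOrbit_zero, Matrix.cons_val_zero, Matrix.cons_val_one]
    nlinarith
  | succ t =>
    rw [threeClusterOrbit_succ]
    set y := threeClusterOrbit A B w a b t
    have hy : IsBracketed A B a b y := isBracketed_threeClusterOrbit hA hB hw hwA hab hAd hBd t
    have hsep_t : 1 ≤ y 2 - y 0 := hsep t t.lt_succ_self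
    obtain ⟨e0, e1, -⟩ := clusterStep_fin_three_of_one_le hA hB hw hAd hBd hy hsep_t
    have hr := (hy.sub_lt_one (by positivity) hAd hBd).1
    have hgap : A * (2 * (A + B) *
        (clusterStep ![A - w, w, B] y 1 - clusterStep ![A - w, w, B] y 0)) =
        2 * B * (A * (y 2 - y 0) - w * (y 1 - y 0)) := by
      linear_combination 2 * A * e1 - 2 * (A + B) * e0
    refine le_of_mul_le_mul_left ?_ hA
    rw [hgap]
    nlinarith [mul_nonneg hB.le (mul_nonneg hw.le (by linarith : 0 ≤ 1 - (y 1 - y 0))),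
      mul_nonneg hA.le (mul_nonneg hB.le (by linarith : 0 ≤ y 2 - y 0 - 1))]

theorem threeClusterOrbit_drift {t : ℕ}
    (hsep : ∀ k < t, 1 ≤ threeClusterOrbit A B w a b k 2 - threeClusterOrbit A B w a b k 0) :
    t * (w * B) ≤ 2 * A * (A + B) * (threeClusterOrbit A B w a b t 0 - a) := by
  induction t with
  | zero => simp [threeClusterOrbit_zero]
  | succ t ih =>
    have hsep' :
        ∀ k < t, 1 ≤ threeClusterOrbit A B w a b k 2 - threeClusterOrbit A B w a b k 0 :=
      fun k hk => hsep k (hk.trans t.lt_succ_self)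
    have hgap := threeClusterOrbit_gap hA hB hw hwA hab hAd hBd hsep'
    have hy := isBracketed_threeClusterOrbit hA hB hw hwA hab hAd hBd t
    obtain ⟨e0, -, -⟩ :=
      clusterStep_fin_three_of_one_le hA hB hw hAd hBd hy (hsep t t.lt_succ_self)
    rw [threeClusterOrbit_succ, Nat.cast_succ]
    nlinarith [ih hsep', mul_le_mul_of_nonneg_left hgap hw.le]

theorem exists_threeClusterOrbit_sub_lt_one :
    ∃ t, threeClusterOrbit A B w a b t 2 - threeClusterOrbit A B w a b t 0 < 1 := by
  by_contra! hsep
  obtain ⟨t, ht⟩ := exists_nat_gt (2 * A * (A + B) * (b - a) / (w * B))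
  have hdrift := threeClusterOrbit_drift hA hB hw hwA hab hAd hBd (t := t) fun k _ => hsep k
  obtain ⟨-, h01, h12, h2b, -, -⟩ := isBracketed_threeClusterOrbit hA hB hw hwA hab hAd hBd t
  rw [div_lt_iff₀ (by positivity)] at ht
  nlinarith [mul_le_mul_of_nonneg_left (by linarith : threeClusterOrbit A B w a b t 0 - a ≤ b - a)
    (by positivity : 0 ≤ 2 * A * (A + B))]

theorem exists_threeClusterOrbit_displaced :
    ∃ t, B ^ 2 ≤ 2 * (A + B) ^ 2 * (threeClusterOrbit A B w a b t 0 - a) := by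
  classical
  have hex := exists_threeClusterOrbit_sub_lt_one hA hB hw hwA hab hAd hBd
  set τ := Nat.find hex
  refine ⟨τ + 1, ?_⟩
  have hgap := threeClusterOrbit_gap hA hB hw hwA hab hAd hBd (t := τ)
    fun k hk => not_lt.1 (Nat.find_min hex hk)
  rw [threeClusterOrbit_succ]
  set y := threeClusterOrbit A B w a b τ
  have hy : IsBracketed A B a b y := isBracketed_threeClusterOrbit hA hB hw hwA hab hAd hBd τ
  have e := clusterStep_fin_three_of_sub_lt_one (w := w) (by positivity) hy (Nat.find_spec hex) 0
  obtain ⟨ha0, h01, h12, -, -, -⟩ := hy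
  have hmove : B * (y 1 - y 0) ≤ (A + B) * (clusterStep ![A - w, w, B] y 0 - y 0) := by
    nlinarith [mul_nonneg hw.le (sub_nonneg.2 h01), mul_nonneg hB.le (sub_nonneg.2 h12)]
  nlinarith [mul_le_mul_of_nonneg_left hgap hB.le, mul_le_mul_of_nonneg_left hmove
    (by positivity : 0 ≤ 2 * (A + B)), mul_nonneg (sq_nonneg (A + B)) (sub_nonneg.2 ha0)]

end ThreeClusterOrbit

theorem mul_lt_add_of_lt_one_add_min_div_max {A B d : ℝ} (hA : 0 < A) (hB : 0 < B)
    (hd : d < 1 + min A B / max A B) : A * d < A + B ∧ B * d < A + B := by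
  have hmax : 0 < max A B := lt_max_of_lt_left hA
  have h : max A B * d < A + B :=
    calc max A B * d < max A B * (1 + min A B / max A B) := mul_lt_mul_of_pos_left hd hmax
      _ = A + B := by rw [mul_add, mul_one, mul_div_cancel₀ _ hmax.ne', add_comm, min_add_max]
  rcases le_or_gt 0 d with hd0 | hd0
  · exact ⟨(mul_le_mul_of_nonneg_right (le_max_left A B) hd0).trans_lt h,
      (mul_le_mul_of_nonneg_right (le_max_right A B) hd0).trans_lt h⟩
  · constructor <;> nlinarith

def levelSet (s : ℝ → ℝ) (a : ℝ) : Set ℝ :=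
  {α ∈ Icc (0 : ℝ) 1 | s α = a}

section LevelSet

variable {L : ℝ} {s : ℝ → ℝ} {a b : ℝ}

theorem muPoint_eq_measureReal (s : ℝ → ℝ) (a : ℝ) :
    muPoint s a = volume.real (levelSet s a) :=
  rfl

theorem measurableSet_levelSet (hs : Measurable s) (a : ℝ) : MeasurableSet (levelSet s a) :=
  measurableSet_Icc.inter (hs (measurableSet_singleton a))

theorem disjoint_levelSet (hab : a ≠ b) : Disjoint (levelSet s a) (levelSet s b) :=
  disjoint_left.2 fun _ ha hb => hab (ha.2.symm.trans hb.2)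

theorem nonempty_levelSet_of_muPoint_pos (ha : 0 < muPoint s a) : (levelSet s a).Nonempty :=
  nonempty_iff_ne_empty.2 fun h => by simp [muPoint_eq_measureReal, h] at ha

theorem measureReal_levelSet_sdiff {C : Set ℝ} (hCa : C ⊆ levelSet s a)
    (hCm : MeasurableSet C) : volume.real (levelSet s a \ C) = muPoint s a - volume.real C :=
  measureReal_sdiff hCa hCm (measure_ne_top_of_subset (fun _ h => h.1) measure_Icc_lt_top.ne)

theorem mem_Icc_of_mem_Fset (hs : s ∈ Fset L) (ha : (levelSet s a).Nonempty) : a ∈ Icc 0 L := by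
  obtain ⟨α, hα, rfl⟩ := ha
  exact hs.2.1 α hα

theorem one_le_sub_of_mem_Fset (hs : s ∈ Fset L) (ha : (levelSet s a).Nonempty)
    (hb : (levelSet s b).Nonempty) (hab : a < b) : 1 ≤ b - a := by
  obtain ⟨αa, hαa, rfl⟩ := ha
  obtain ⟨αb, hαb, rfl⟩ := hb
  have h := (hs.2.2 αa hαa αb hαb).resolve_left hab.ne
  rwa [abs_sub_comm, abs_of_pos (sub_pos.2 hab)] at h

theorem one_le_abs_sub_of_mem_Fset (hs : s ∈ Fset L) {v : ℝ} (ha : (levelSet s a).Nonempty)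
    (hb : (levelSet s b).Nonempty) (hab : b - a < 2) (hv : v ∈ Icc a b) {β : ℝ}
    (hβ : β ∈ Icc (0 : ℝ) 1) (hβa : s β ≠ a) (hβb : s β ≠ b) : 1 ≤ |v - s β| := by
  obtain ⟨αa, hαa, rfl⟩ := ha
  obtain ⟨αb, hαb, rfl⟩ := hb
  have h1 := (hs.2.2 αa hαa β hβ).resolve_left hβa.symm
  have h2 := (hs.2.2 αb hαb β hβ).resolve_left hβb.symm
  obtain ⟨hav, hvb⟩ := hv
  rw [le_abs']
  rcases le_abs'.1 h1 with h1 | h1 <;> rcases le_abs'.1 h2 with h2 | h2 <;>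
    first | (left; linarith) | (right; linarith)

theorem isKrauseTraj_threeClusterProfile (hs : s ∈ Fset L) (hab : a < b)
    (ha : 0 < muPoint s a) (hb : 0 < muPoint s b)
    (hAd : muPoint s a * (b - a) < muPoint s a + muPoint s b)
    (hBd : muPoint s b * (b - a) < muPoint s a + muPoint s b)
    {w : ℝ} (hw : 0 < w) (hwA : 2 * w ≤ muPoint s a) {C : Set ℝ} (hCa : C ⊆ levelSet s a)
    (hCm : MeasurableSet C) (hCw : volume.real C = w) :
    IsKrauseTraj L fun t => clusterProfile s ![levelSet s a \ C, C, levelSet s b]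
      (threeClusterOrbit (muPoint s a) (muPoint s b) w a b t) := by
  set A := muPoint s a
  set B := muPoint s b
  set E := ![levelSet s a \ C, C, levelSet s b]
  have hSa := nonempty_levelSet_of_muPoint_pos ha
  have hSb := nonempty_levelSet_of_muPoint_pos hb
  have hab1 := one_le_sub_of_mem_Fset hs hSa hSb hab
  have hEm : ∀ j, MeasurableSet (E j) := by
    intro j; fin_cases j
    exacts [(measurableSet_levelSet hs.1 a).diff hCm, hCm, measurableSet_levelSet hs.1 b]
  have hEsub : ∀ j, E j ⊆ Icc 0 1 := by
    intro j; fin_cases j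
    exacts [sdiff_subset.trans fun α h => h.1, hCa.trans fun α h => h.1, fun α h => h.1]
  have hm : ∀ j, volume.real (E j) = ![A - w, w, B] j := by
    intro j; fin_cases j
    · exact (measureReal_levelSet_sdiff hCa hCm).trans (by rw [hCw]; rfl)
    · exact hCw
    · rfl
  have hm0 : ∀ j, 0 < ![A - w, w, B] j := by
    intro j; fin_cases j <;> simp <;> linarith
  have hY := isBracketed_threeClusterOrbit ha hb hw hwA hab1 hAd hBd
  have hYL : ∀ t j, threeClusterOrbit A B w a b t j ∈ Icc 0 L := fun t j =>
    ⟨(mem_Icc_of_mem_Fset hs hSa).1.trans ((hY t).mem_Icc j).1,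
      ((hY t).mem_Icc j).2.trans (mem_Icc_of_mem_Fset hs hSb).2⟩
  have hfar : ∀ t j, ∀ β ∈ Icc (0 : ℝ) 1, (∀ k, β ∉ E k) →
      1 ≤ |threeClusterOrbit A B w a b t j - s β| := by
    intro t j β hβ hout
    refine one_le_abs_sub_of_mem_Fset hs hSa hSb (by nlinarith) ((hY t).mem_Icc j) hβ
      (fun h => ?_) (fun h => hout 2 ⟨hβ, h⟩)
    by_cases hβC : β ∈ C
    exacts [hout 1 hβC, hout 0 ⟨⟨hβ, h⟩, hβC⟩]
  exact isKrauseTraj_clusterProfile hs (pairwise_disjoint_on_sdiff_three hCa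
    (disjoint_levelSet hab.ne)) hEm hEsub hm hm0 threeClusterOrbit_succ hYL hfar

theorem clusterProfile_threeClusterOrbit_zero (hab : a ≠ b) {A B w : ℝ} {C : Set ℝ}
    (hCa : C ⊆ levelSet s a) {α : ℝ} (hα : α ∈ Icc (0 : ℝ) 1) (hαC : α ∉ C) :
    clusterProfile s ![levelSet s a \ C, C, levelSet s b] (threeClusterOrbit A B w a b 0) α =
      s α := by
  have hE := pairwise_disjoint_on_sdiff_three hCa (disjoint_levelSet (s := s) hab)
  by_cases hαa : s α = a
  · rw [clusterProfile_of_mem hE (i := 0) ⟨⟨hα, hαa⟩, hαC⟩, hαa]; rfl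
  by_cases hαb : s α = b
  · rw [clusterProfile_of_mem hE (i := 2) ⟨hα, hαb⟩, hαb]; rfl
  refine clusterProfile_of_forall_notMem fun j hαj => ?_
  fin_cases j
  exacts [hαa hαj.1.2, hαa (hCa hαj).2, hαb hαj.2]

theorem exists_isKrauseTraj_displaced (hs : s ∈ Fset L) (hab : a < b)
    (ha : 0 < muPoint s a) (hb : 0 < muPoint s b)
    (hgap : b - a < 1 + min (muPoint s a) (muPoint s b) / max (muPoint s a) (muPoint s b))
    {w : ℝ} (hw : 0 < w) (hwA : 2 * w ≤ muPoint s a) :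
    ∃ x : ℕ → ℝ → ℝ, IsKrauseTraj L x ∧
      volume {α ∈ Icc (0 : ℝ) 1 | x 0 α ≠ s α} ≤ ENNReal.ofReal w ∧
      ∃ t, ENNReal.ofReal (muPoint s a - w) ≤ volume {α ∈ Icc (0 : ℝ) 1 |
        muPoint s b ^ 2 / (2 * (muPoint s a + muPoint s b) ^ 2) ≤ |x t α - s α|} := by
  set A := muPoint s a
  set B := muPoint s b
  obtain ⟨hAd, hBd⟩ := mul_lt_add_of_lt_one_add_min_div_max ha hb hgap
  obtain ⟨C, hCa, hCm, hCw⟩ := exists_subset_measureReal_eq (measurableSet_levelSet hs.1 a)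
    (fun α h => h.1) hw.le (by linarith : w ≤ A)
  set E := ![levelSet s a \ C, C, levelSet s b]
  set Y := threeClusterOrbit A B w a b
  have hE : Pairwise (Disjoint on E) :=
    pairwise_disjoint_on_sdiff_three hCa (disjoint_levelSet hab.ne)
  refine ⟨fun t => clusterProfile s E (Y t),
    isKrauseTraj_threeClusterProfile hs hab ha hb hAd hBd hw hwA hCa hCm hCw, ?_, ?_⟩
  · calc volume {α ∈ Icc (0 : ℝ) 1 | clusterProfile s E (Y 0) α ≠ s α} ≤ volume C :=
          measure_mono fun α ⟨hα, hne⟩ => by_contra fun hαC =>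
            hne (clusterProfile_threeClusterOrbit_zero hab.ne hCa hα hαC)
      _ = ENNReal.ofReal w := by
          rw [← hCw, ofReal_measureReal (measure_ne_top_of_subset (hCa.trans fun α h => h.1)
            measure_Icc_lt_top.ne)]
  · obtain ⟨t, ht⟩ := exists_threeClusterOrbit_displaced ha hb hw hwA
      (one_le_sub_of_mem_Fset hs (nonempty_levelSet_of_muPoint_pos ha)
        (nonempty_levelSet_of_muPoint_pos hb) hab) hAd hBd
    refine ⟨t, ?_⟩
    calc ENNReal.ofReal (A - w) = volume (levelSet s a \ C) := by
          rw [← ofReal_measureReal (measure_ne_top_of_subset (sdiff_subset.trans fun α h => h.1)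
            measure_Icc_lt_top.ne), measureReal_levelSet_sdiff hCa hCm, hCw]
      _ ≤ _ := by
          refine measure_mono fun α hα => ⟨hα.1.1, ?_⟩
          show _ ≤ |clusterProfile s E (Y t) α - s α|
          rw [clusterProfile_of_mem hE (i := 0) hα, hα.1.2, div_le_iff₀ (by positivity)]
          nlinarith [le_abs_self (Y t 0 - a)]

theorem IsStableC.one_add_min_div_max_le_sub (hstab : IsStableC L s) (hs : s ∈ Fset L)
    (hab : a < b) (ha : 0 < muPoint s a) (hb : 0 < muPoint s b) :
    1 + min (muPoint s a) (muPoint s b) / max (muPoint s a) (muPoint s b) ≤ b - a := by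
  by_contra! hgap
  set A := muPoint s a
  set B := muPoint s b
  set η := B ^ 2 / (2 * (A + B) ^ 2)
  set ε := min η (A / 2)
  obtain ⟨δ, hδ, hstable⟩ := hstab ε (lt_min (by positivity) (by positivity))
  set w := min (δ / 2) (A / 2)
  have hwA : w ≤ A / 2 := min_le_right _ _
  obtain ⟨x, hx, hx0, t, ht⟩ := exists_isKrauseTraj_displaced (w := w) hs hab ha hb hgap
    (lt_min (by positivity) (by positivity)) (by linarith)
  refine (hstable x hx ?_ t).not_ge ?_
  · calc volume {α ∈ Icc (0 : ℝ) 1 | δ ≤ |x 0 α - s α|}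
        ≤ volume {α ∈ Icc (0 : ℝ) 1 | x 0 α ≠ s α} := by
          refine measure_mono fun α ⟨hα, hδα⟩ => ⟨hα, fun he => ?_⟩
          rw [he, sub_self, abs_zero] at hδα
          linarith
      _ ≤ ENNReal.ofReal w := hx0
      _ < ENNReal.ofReal δ :=
          (ENNReal.ofReal_lt_ofReal_iff hδ).2 ((min_le_left _ _).trans_lt (half_lt_self hδ))
  · calc ENNReal.ofReal ε ≤ ENNReal.ofReal (A - w) :=
          ENNReal.ofReal_le_ofReal (by linarith [min_le_right η (A / 2)])
      _ ≤ volume {α ∈ Icc (0 : ℝ) 1 | η ≤ |x t α - s α|} := ht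
      _ ≤ volume {α ∈ Icc (0 : ℝ) 1 | ε ≤ |x t α - s α|} :=
          measure_mono fun α ⟨hα, hηα⟩ => ⟨hα, (min_le_left η _).trans hηα⟩

end LevelSet

theorem krause_continuum_stability_necessary_general (L : ℝ) (s : ℝ → ℝ)
    (hs : s ∈ Fset L) (hstab : IsStableC L s) (a b : ℝ) (hab : a ≠ b)
    (ha : 0 < muPoint s a) (hb : 0 < muPoint s b) :
    1 + min (muPoint s a) (muPoint s b) / max (muPoint s a) (muPoint s b) ≤
      |b - a| := by
  rcases hab.lt_or_gt with h | h
  · rw [abs_of_pos (sub_pos.2 h)]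
    exact hstab.one_add_min_div_max_le_sub hs h ha hb
  · rw [abs_sub_comm, abs_of_pos (sub_pos.2 h), min_comm, max_comm]
    exact hstab.one_add_min_div_max_le_sub hs h hb ha

/-- If a fixed point `s ∈ F` of the continuous-agent Krause
model is stable, then any two distinct values `a, b` of `s` carrying positive
measure satisfy `|b − a| ≥ 1 + min(μ_s(a), μ_s(b)) / max(μ_s(a), μ_s(b))`. -/
theorem krause_continuum_stability_necessary (L : ℝ) (hL : 0 < L) (s : ℝ → ℝ)
    (hs : s ∈ Fset L) (hstab : IsStableC L s) (a b : ℝ) (hab : a ≠ b)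
    (ha : 0 < muPoint s a) (hb : 0 < muPoint s b) :
    1 + min (muPoint s a) (muPoint s b) / max (muPoint s a) (muPoint s b) ≤
      |b - a| :=
  krause_continuum_stability_necessary_general L s hs hstab a b hab ha hb
end

section
/- Let L > 0 and let x ∈ X_L be a regular opinion function such that sup_α x(α) − inf_α x(α) > 2. Then U(x) is regular, where U is the one-step update operator of the continuous-agent Krause model. -/
/-!
Push Lebesgue measure on `[0, 1]` forward along `x` to get the opinion distribution `μ_x`; it
lives on `[s, S] = [inf x, sup x]` and has density between `m` and `M` there. On `[0, 1]`,
`U(x) = g ∘ x`, where `g v` is the mean of `μ_x` over the window `(v - 1, v + 1)`. The density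
bounds keep `g v` at distance at least `m / 8M` from both ends of its window. Moving the window
from `u` to a nearby `v > u` adds mass above `g u` and removes mass below it, each at distance of
order `m / M` from `g u`, and because `S - s ≥ 2` the mass moved is at least `m (v - u)`. Hence `g`
is increasing and bi-Lipschitz on `[s, S]` (locally, then globally by chaining), so the agents
whose new opinion lies in `[g a, g b]` are exactly those whose old opinion lies in `[a, b]`.
-/

open MeasureTheory Set

/-- A regular opinion function: the density of agents on every subinterval of
`[inf x, sup x]` (extrema over `[0,1]`) is bounded above and below by positive
constants `M ≥ m > 0`. -/
def RegularOpinion (x : ℝ → ℝ) : Prop :=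
  ∃ m M : ℝ, 0 < m ∧ m ≤ M ∧ ∀ a b : ℝ,
    sInf (x '' Set.Icc (0 : ℝ) 1) ≤ a → a ≤ b →
    b ≤ sSup (x '' Set.Icc (0 : ℝ) 1) →
    m * (b - a) ≤ (volume {α ∈ Set.Icc (0 : ℝ) 1 | x α ∈ Set.Icc a b}).toReal ∧
    (volume {α ∈ Set.Icc (0 : ℝ) 1 | x α ∈ Set.Icc a b}).toReal ≤ M * (b - a)

theorem monotoneOn_of_forall_le_add {β : Type*} [Preorder β] {f : ℝ → β} {s : Set ℝ}
    [s.OrdConnected] {δ : ℝ} (hδ : 0 < δ)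
    (hf : ∀ u ∈ s, ∀ v ∈ s, u ≤ v → v ≤ u + δ → f u ≤ f v) : MonotoneOn f s := by
  have chain : ∀ n : ℕ, ∀ u ∈ s, ∀ v ∈ s, u ≤ v → v ≤ u + n * δ → f u ≤ f v := by
    intro n
    induction n with
    | zero =>
      intro u _ v _ huv hvu
      rw [le_antisymm huv (by simpa using hvu)]
    | succ n ih =>
      intro u hu v hv huv hvu
      rcases le_total v (u + δ) with hv' | hv'
      · exact hf u hu v hv huv hv'
      · have hw : u + δ ∈ s := Set.OrdConnected.out ‹_› hu hv ⟨by linarith, hv'⟩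
        exact (hf u hu _ hw (by linarith) le_rfl).trans
          (ih _ hw v hv hv' (by push_cast at hvu; linarith))
  intro u hu v hv huv
  obtain ⟨n, hn⟩ := exists_nat_ge ((v - u) / δ)
  exact chain n u hu v hv huv (by rw [div_le_iff₀ hδ] at hn; linarith)

section SetIntegral

variable {X : Type*} [MeasurableSpace X] {μ : Measure X} [IsFiniteMeasure μ]
  {f : X → ℝ} {t : Set X} {a b : ℝ}

theorem setIntegral_mem_Icc_of_forall_mem (ht : MeasurableSet t) (hf : IntegrableOn f t μ)
    (hab : ∀ x ∈ t, f x ∈ Icc a b) :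
    ∫ x in t, f x ∂μ ∈ Icc (a * μ.real t) (b * μ.real t) := by
  refine ⟨setIntegral_ge_of_const_le_real ht (measure_ne_top μ t) (fun x hx => (hab x hx).1) hf, ?_⟩
  rw [mul_comm, ← smul_eq_mul, ← setIntegral_const]
  exact setIntegral_mono_on hf (integrableOn_const (measure_ne_top μ t)) ht fun x hx => (hab x hx).2

theorem mul_measureReal_le_setIntegral_of_subset {J : Set X} (hJ : MeasurableSet J)
    (ht : MeasurableSet t) (hJt : J ⊆ t) (hf : IntegrableOn f t μ) (hf0 : ∀ x ∈ t, 0 ≤ f x)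
    (hfa : ∀ x ∈ J, a ≤ f x) : a * μ.real J ≤ ∫ x in t, f x ∂μ :=
  (setIntegral_ge_of_const_le_real hJ (measure_ne_top μ J) hfa (hf.mono_set hJt)).trans
    (setIntegral_mono_set hf ((ae_restrict_iff' ht).2 (ae_of_all μ hf0)) hJt.eventuallyLE)

end SetIntegral

noncomputable def windowMean (μ : Measure ℝ) (v : ℝ) : ℝ :=
  (∫ w in Ioo (v - 1) (v + 1), w ∂μ) / μ.real (Ioo (v - 1) (v + 1))

section WindowMean

variable {μ : Measure ℝ} [IsFiniteMeasure μ] {u v : ℝ}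

theorem integrableOn_id_Ioo (a b : ℝ) : IntegrableOn (fun w => w) (Ioo a b) μ :=
  continuous_id'.integrableOn_Icc.mono_set Ioo_subset_Icc_self

theorem integrableOn_Ioo_sub_const (a b c : ℝ) :
    IntegrableOn (fun w => w - c) (Ioo a b) μ :=
  (continuous_id.sub continuous_const).integrableOn_Icc.mono_set Ioo_subset_Icc_self

theorem integrableOn_Ioo_const_sub (a b c : ℝ) :
    IntegrableOn (fun w => c - w) (Ioo a b) μ :=
  (continuous_const.sub continuous_id).integrableOn_Icc.mono_set Ioo_subset_Icc_self



theorem windowMean_sub (c : ℝ) (hv : μ.real (Ioo (v - 1) (v + 1)) ≠ 0) :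
    windowMean μ v - c =
      (∫ w in Ioo (v - 1) (v + 1), (w - c) ∂μ) / μ.real (Ioo (v - 1) (v + 1)) := by
  rw [integral_sub (integrableOn_id_Ioo _ _) integrableOn_const,
    setIntegral_const, smul_eq_mul, windowMean]
  field_simp

theorem sub_windowMean (c : ℝ) (hv : μ.real (Ioo (v - 1) (v + 1)) ≠ 0) :
    c - windowMean μ v =
      (∫ w in Ioo (v - 1) (v + 1), (c - w) ∂μ) / μ.real (Ioo (v - 1) (v + 1)) := by
  rw [integral_sub (integrableOn_const (C := c)) (integrableOn_id_Ioo _ _),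
    setIntegral_const, smul_eq_mul, windowMean]
  field_simp

theorem setIntegral_sub_windowMean (hv : μ.real (Ioo (v - 1) (v + 1)) ≠ 0) :
    ∫ w in Ioo (v - 1) (v + 1), (w - windowMean μ v) ∂μ = 0 := by
  simpa [hv] using (windowMean_sub (windowMean μ v) hv).symm

-- Moving the window from `u` to `v` adds the strip `[u + 1, v + 1)` and removes `(u - 1, v - 1]`,
-- and `w - windowMean μ u` integrates to zero over the old window.
theorem windowMean_sub_windowMean (huv : u ≤ v) (hvu : v < u + 2)
    (hu : μ.real (Ioo (u - 1) (u + 1)) ≠ 0) (hv : μ.real (Ioo (v - 1) (v + 1)) ≠ 0) :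
    windowMean μ v - windowMean μ u =
      ((∫ w in Ico (u + 1) (v + 1), (w - windowMean μ u) ∂μ) -
        ∫ w in Ioc (u - 1) (v - 1), (w - windowMean μ u) ∂μ) / μ.real (Ioo (v - 1) (v + 1)) := by
  have hint : ∀ t ⊆ Icc (u - 1) (v + 1), IntegrableOn (fun w => w - windowMean μ u) t μ :=
    fun t ht => (continuous_id.sub continuous_const).integrableOn_Icc.mono_set ht
  have hold := setIntegral_sub_windowMean hu
  rw [← Ioc_union_Ioo_eq_Ioo (by linarith) (by linarith : v - 1 < u + 1),
    setIntegral_union (Ioc_disjoint_Ioi_same.mono_right Ioo_subset_Ioi_self) measurableSet_Ioo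
      (hint _ (Ioc_subset_Icc_self.trans (Icc_subset_Icc le_rfl (by linarith))))
      (hint _ (Ioo_subset_Icc_self.trans (Icc_subset_Icc (by linarith) (by linarith))))] at hold
  rw [windowMean_sub _ hv, ← Ioo_union_Ico_eq_Ioo (by linarith : v - 1 < u + 1) (by linarith),
    setIntegral_union ((Iio_disjoint_Ici le_rfl).mono Ioo_subset_Iio_self Ico_subset_Ici_self)
      measurableSet_Ico
      (hint _ (Ioo_subset_Icc_self.trans (Icc_subset_Icc (by linarith) (by linarith))))
      (hint _ (Ico_subset_Icc_self.trans (Icc_subset_Icc (by linarith) le_rfl)))]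
  congr 1
  linarith

end WindowMean

-- Regularity in the sense of the paper, for a measure on `ℝ` carried by `[s, S]`.
structure IsDensityBounded (μ : Measure ℝ) (s S m M : ℝ) : Prop where
  m_pos : 0 < m
  m_le_M : m ≤ M
  ae_mem : ∀ᵐ w ∂μ, w ∈ Icc s S
  le_measureReal_Icc : ∀ a b, s ≤ a → a ≤ b → b ≤ S → m * (b - a) ≤ μ.real (Icc a b)
  measureReal_Icc_le : ∀ a b, s ≤ a → a ≤ b → b ≤ S → μ.real (Icc a b) ≤ M * (b - a)

namespace IsDensityBounded

variable {μ : Measure ℝ} {s S m M u v : ℝ}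

theorem M_pos (h : IsDensityBounded μ s S m M) : 0 < M := h.m_pos.trans_le h.m_le_M

theorem measureReal_Icc_le_of_le (h : IsDensityBounded μ s S m M) {a b : ℝ} (hab : a ≤ b) :
    μ.real (Icc a b) ≤ M * (b - a) := by
  rw [← measureReal_congr (inter_ae_eq_left_of_ae_eq_univ (ae_eq_univ.2 (ae_iff.1 h.ae_mem))),
    Icc_inter_Icc]
  rcases le_or_gt (a ⊔ s) (b ⊓ S) with hne | hempty
  · calc μ.real (Icc (a ⊔ s) (b ⊓ S)) ≤ M * (b ⊓ S - a ⊔ s) :=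
          h.measureReal_Icc_le _ _ le_sup_right hne inf_le_right
      _ ≤ M * (b - a) := by
          gcongr
          · exact h.M_pos.le
          · exact inf_le_left
          · exact le_sup_left
  · rw [Icc_eq_empty hempty.not_ge, measureReal_empty]
    exact mul_nonneg h.M_pos.le (sub_nonneg.2 hab)

variable [IsFiniteMeasure μ]

theorem nullSingletonClass (h : IsDensityBounded μ s S m M) : NullSingletonClass μ where
  measure_singleton v := by
    have hv := h.measureReal_Icc_le_of_le (le_refl v)
    rw [Icc_self, sub_self, mul_zero] at hv
    exact (measureReal_eq_zero_iff).1 (le_antisymm hv measureReal_nonneg)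

theorem le_measureReal_Ioo (h : IsDensityBounded μ s S m M) {a b : ℝ} (ha : s ≤ a)
    (hab : a ≤ b) (hb : b ≤ S) : m * (b - a) ≤ μ.real (Ioo a b) := by
  have := h.nullSingletonClass
  rw [measureReal_congr Ioo_ae_eq_Icc]
  exact h.le_measureReal_Icc a b ha hab hb

theorem le_measureReal_window (h : IsDensityBounded μ s S m M) (hsS : s + 1 ≤ S)
    (hv : v ∈ Icc s S) : m ≤ μ.real (Ioo (v - 1) (v + 1)) := by
  set a := min v (S - 1)
  have hva : v - 1 ≤ a := le_min (by linarith) (by linarith [hv.2])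
  calc m = m * (a + 1 - a) := by ring
    _ ≤ μ.real (Ioo a (a + 1)) :=
      h.le_measureReal_Ioo (le_min hv.1 (by linarith)) (by linarith)
        (by linarith [min_le_right v (S - 1)])
    _ ≤ μ.real (Ioo (v - 1) (v + 1)) :=
      measureReal_mono (Ioo_subset_Ioo hva (by linarith [min_le_left v (S - 1)]))

theorem measureReal_window_le (h : IsDensityBounded μ s S m M) (v : ℝ) :
    μ.real (Ioo (v - 1) (v + 1)) ≤ 2 * M :=
  calc μ.real (Ioo (v - 1) (v + 1)) ≤ μ.real (Icc (v - 1) (v + 1)) :=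
        measureReal_mono Ioo_subset_Icc_self
    _ ≤ M * (v + 1 - (v - 1)) := h.measureReal_Icc_le_of_le (by linarith)
    _ = 2 * M := by ring

theorem le_measureReal_Ico_add_Ioc (h : IsDensityBounded μ s S m M) (hsS : s + 2 ≤ S)
    (hu : s ≤ u) (huv : u ≤ v) (hv : v ≤ S) :
    m * (v - u) ≤ μ.real (Ico (u + 1) (v + 1)) + μ.real (Ioc (u - 1) (v - 1)) := by
  have hT : ∀ b ≤ v + 1, μ.real (Ioo (u + 1) b) ≤ μ.real (Ico (u + 1) (v + 1)) := fun b hb =>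
    measureReal_mono (Ioo_subset_Ico_self.trans (Ico_subset_Ico_right hb))
  have hB : ∀ a ≥ u - 1, μ.real (Ioo a (v - 1)) ≤ μ.real (Ioc (u - 1) (v - 1)) := fun a ha =>
    measureReal_mono (Ioo_subset_Ioc_self.trans (Ioc_subset_Ioc_left ha))
  have hT0 : 0 ≤ μ.real (Ico (u + 1) (v + 1)) := measureReal_nonneg
  have hB0 : 0 ≤ μ.real (Ioc (u - 1) (v - 1)) := measureReal_nonneg
  by_cases hvS : v + 1 ≤ S
  · have := h.le_measureReal_Ioo (a := u + 1) (b := v + 1) (by linarith) (by linarith) hvS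
    linarith [hT _ le_rfl]
  by_cases hsu : s ≤ u - 1
  · have := h.le_measureReal_Ioo (a := u - 1) (b := v - 1) hsu (by linarith) (by linarith)
    linarith [hB _ le_rfl]
  -- both strips stick out of `[s, S]`; since `S - s ≥ 2`, their parts inside `[s, S]` still
  -- have total length at least `v - u`
  have h₁ := h.le_measureReal_Ioo (a := u + 1) (b := S) (by linarith) (by linarith) le_rfl
  have h₂ := h.le_measureReal_Ioo (a := s) (b := v - 1) le_rfl (by linarith) (by linarith)
  nlinarith [hT S (by linarith), hB s (by linarith), h.m_pos]

theorem div_le_div_measureReal_window (h : IsDensityBounded μ s S m M) (hsS : s + 1 ≤ S)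
    (hv : v ∈ Icc s S) {A : ℝ} (hA : 0 ≤ A) :
    A / (2 * M) ≤ A / μ.real (Ioo (v - 1) (v + 1)) :=
  div_le_div_of_nonneg_left hA (h.m_pos.trans_le (h.le_measureReal_window hsS hv))
    (h.measureReal_window_le v)

theorem le_windowMean (h : IsDensityBounded μ s S m M) (hsS : s + 1 ≤ S) (hv : v ∈ Icc s S) :
    v - 1 + m / (8 * M) ≤ windowMean μ v := by
  set a := min v (S - 1 / 2)
  have hva : v - 1 / 2 ≤ a := le_min (by linarith) (by linarith [hv.2])
  have hJ : m * (a + 1 / 2 - a) ≤ μ.real (Ioo a (a + 1 / 2)) :=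
    h.le_measureReal_Ioo (le_min hv.1 (by linarith)) (by linarith)
      (by linarith [min_le_right v (S - 1 / 2)])
  have hint : 1 / 2 * μ.real (Ioo a (a + 1 / 2)) ≤ ∫ w in Ioo (v - 1) (v + 1), (w - (v - 1)) ∂μ :=
    mul_measureReal_le_setIntegral_of_subset measurableSet_Ioo measurableSet_Ioo
      (Ioo_subset_Ioo (by linarith) (by linarith [min_le_left v (S - 1 / 2)]))
      (integrableOn_Ioo_sub_const _ _ _) (fun w hw => by linarith [hw.1])
      (fun w hw => by linarith [hw.1])
  have hD := (h.le_measureReal_window hsS hv).trans_lt' h.m_pos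
  calc v - 1 + m / (8 * M) = v - 1 + m / 4 / (2 * M) := by field_simp; ring
    _ ≤ v - 1 + m / 4 / μ.real (Ioo (v - 1) (v + 1)) := by
      linarith [h.div_le_div_measureReal_window hsS hv (A := m / 4) (by linarith [h.m_pos])]
    _ ≤ v - 1 + (∫ w in Ioo (v - 1) (v + 1), (w - (v - 1)) ∂μ) / μ.real (Ioo (v - 1) (v + 1)) := by
      gcongr
      linarith
    _ = windowMean μ v := by rw [← windowMean_sub _ hD.ne']; ring

theorem windowMean_le (h : IsDensityBounded μ s S m M) (hsS : s + 1 ≤ S) (hv : v ∈ Icc s S) :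
    windowMean μ v ≤ v + 1 - m / (8 * M) := by
  set b := max v (s + 1 / 2)
  have hbv : b ≤ v + 1 / 2 := max_le (by linarith) (by linarith [hv.1])
  have hJ : m * (b - (b - 1 / 2)) ≤ μ.real (Ioo (b - 1 / 2) b) :=
    h.le_measureReal_Ioo (by linarith [le_max_right v (s + 1 / 2)]) (by linarith)
      (max_le hv.2 (by linarith))
  have hint : 1 / 2 * μ.real (Ioo (b - 1 / 2) b) ≤ ∫ w in Ioo (v - 1) (v + 1), (v + 1 - w) ∂μ :=
    mul_measureReal_le_setIntegral_of_subset measurableSet_Ioo measurableSet_Ioo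
      (Ioo_subset_Ioo (by linarith [le_max_left v (s + 1 / 2)]) (by linarith))
      (integrableOn_Ioo_const_sub _ _ _) (fun w hw => by linarith [hw.2])
      (fun w hw => by linarith [hw.2])
  have hD := (h.le_measureReal_window hsS hv).trans_lt' h.m_pos
  calc windowMean μ v
      = v + 1 - (∫ w in Ioo (v - 1) (v + 1), (v + 1 - w) ∂μ) / μ.real (Ioo (v - 1) (v + 1)) := by
        rw [← sub_windowMean _ hD.ne']; ring
    _ ≤ v + 1 - m / 4 / μ.real (Ioo (v - 1) (v + 1)) := by
      gcongr
      linarith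
    _ ≤ v + 1 - m / 4 / (2 * M) := by
      linarith [h.div_le_div_measureReal_window hsS hv (A := m / 4) (by linarith [h.m_pos])]
    _ = v + 1 - m / (8 * M) := by field_simp; ring

theorem setIntegral_Ico_sub_setIntegral_Ioc_mem (h : IsDensityBounded μ s S m M)
    (hsS : s + 2 ≤ S) (hu : s ≤ u) (huv : u ≤ v) (hv : v ≤ S) (hvu : v ≤ u + m / (16 * M)) :
    (∫ w in Ico (u + 1) (v + 1), (w - windowMean μ u) ∂μ) -
        ∫ w in Ioc (u - 1) (v - 1), (w - windowMean μ u) ∂μ ∈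
      Icc (m ^ 2 / (16 * M) * (v - u)) (6 * M * (v - u)) := by
  have hm := h.m_pos
  have hM := h.M_pos
  set κ := m / (8 * M) with hκ
  have hκ₀ : 0 < κ := by positivity
  have hκ₁ : κ ≤ 1 / 8 := by rw [hκ, div_le_iff₀ (by positivity)]; linarith [h.m_le_M]
  have hvu' : v - u ≤ κ / 2 := by
    have : m / (16 * M) = κ / 2 := by rw [hκ]; field_simp; ring
    linarith
  set g := windowMean μ u
  have hg₁ : u - 1 + κ ≤ g := h.le_windowMean (by linarith) ⟨hu, huv.trans hv⟩
  have hg₂ : g ≤ u + 1 - κ := h.windowMean_le (by linarith) ⟨hu, huv.trans hv⟩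
  have hint : ∀ t ⊆ Icc (u - 1) (v + 1), IntegrableOn (fun w => w - g) t μ :=
    fun t ht => (continuous_id.sub continuous_const).integrableOn_Icc.mono_set ht
  set T := Ico (u + 1) (v + 1)
  set B := Ioc (u - 1) (v - 1)
  have hT := setIntegral_mem_Icc_of_forall_mem (t := T) (a := κ) (b := 3) measurableSet_Ico
    (hint _ (Ico_subset_Icc_self.trans (Icc_subset_Icc (by linarith) le_rfl)))
    (fun w hw => ⟨by linarith [hw.1], by linarith [hw.2]⟩)
  have hB := setIntegral_mem_Icc_of_forall_mem (t := B) (a := -2) (b := -(κ / 2))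
    measurableSet_Ioc (hint _ (Ioc_subset_Icc_self.trans (Icc_subset_Icc le_rfl (by linarith))))
    (fun w hw => ⟨by linarith [hw.1], by linarith [hw.2]⟩)
  have hmass : m * (v - u) ≤ μ.real T + μ.real B := h.le_measureReal_Ico_add_Ioc hsS hu huv hv
  have hT' : μ.real T ≤ M * (v - u) :=
    (measureReal_mono Ico_subset_Icc_self).trans
      ((h.measureReal_Icc_le_of_le (by linarith)).trans_eq (by ring))
  have hB' : μ.real B ≤ M * (v - u) :=
    (measureReal_mono Ioc_subset_Icc_self).trans
      ((h.measureReal_Icc_le_of_le (by linarith)).trans_eq (by ring))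
  have hT₀ : 0 ≤ μ.real T := measureReal_nonneg
  constructor
  · calc m ^ 2 / (16 * M) * (v - u) = κ / 2 * (m * (v - u)) := by rw [hκ]; field_simp; ring
      _ ≤ κ / 2 * (μ.real T + μ.real B) := by gcongr
      _ ≤ κ * μ.real T + κ / 2 * μ.real B := by nlinarith
      _ ≤ _ := by linarith [hT.1, hB.2]
  · linarith [hT.2, hB.1]

theorem windowMean_sub_windowMean_mem_of_le_add (h : IsDensityBounded μ s S m M)
    (hsS : s + 2 ≤ S) (hu : s ≤ u) (huv : u ≤ v) (hv : v ≤ S) (hvu : v ≤ u + m / (16 * M)) :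
    windowMean μ v - windowMean μ u ∈
      Icc (m ^ 2 / (32 * M ^ 2) * (v - u)) (6 * M / m * (v - u)) := by
  have hm := h.m_pos
  have hM := h.M_pos
  have hDu := (h.le_measureReal_window (v := u) (by linarith) ⟨hu, huv.trans hv⟩).trans_lt' hm
  have hDv₁ := h.le_measureReal_window (v := v) (by linarith) ⟨hu.trans huv, hv⟩
  have hDv₂ := h.measureReal_window_le v
  have hN := h.setIntegral_Ico_sub_setIntegral_Ioc_mem hsS hu huv hv hvu
  have hvu₂ : v < u + 2 := by
    have : m / (16 * M) < 2 := by rw [div_lt_iff₀ (by positivity)]; linarith [h.m_le_M]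
    linarith
  rw [windowMean_sub_windowMean huv hvu₂ hDu.ne' (hDv₁.trans_lt' hm).ne']
  constructor
  · rw [le_div_iff₀ (hDv₁.trans_lt' hm)]
    calc m ^ 2 / (32 * M ^ 2) * (v - u) * μ.real (Ioo (v - 1) (v + 1))
        ≤ m ^ 2 / (32 * M ^ 2) * (v - u) * (2 * M) := by gcongr
      _ = m ^ 2 / (16 * M) * (v - u) := by field_simp; ring
      _ ≤ _ := hN.1
  · rw [div_le_iff₀ (hDv₁.trans_lt' hm)]
    calc _ ≤ 6 * M * (v - u) := hN.2
      _ = 6 * M / m * (v - u) * m := by field_simp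
      _ ≤ 6 * M / m * (v - u) * μ.real (Ioo (v - 1) (v + 1)) := by gcongr

theorem windowMean_sub_windowMean_mem (h : IsDensityBounded μ s S m M) (hsS : s + 2 ≤ S)
    (hu : s ≤ u) (huv : u ≤ v) (hv : v ≤ S) :
    windowMean μ v - windowMean μ u ∈
      Icc (m ^ 2 / (32 * M ^ 2) * (v - u)) (6 * M / m * (v - u)) := by
  have hδ : 0 < m / (16 * M) := div_pos h.m_pos (by linarith [h.M_pos])
  have hlow := monotoneOn_of_forall_le_add (s := Icc s S)
    (f := fun v => windowMean μ v - m ^ 2 / (32 * M ^ 2) * v) hδ fun u hu v hv huv hvu => by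
      linarith [(h.windowMean_sub_windowMean_mem_of_le_add hsS hu.1 huv hv.2 hvu).1]
  have hupp := monotoneOn_of_forall_le_add (s := Icc s S)
    (f := fun v => 6 * M / m * v - windowMean μ v) hδ fun u hu v hv huv hvu => by
      linarith [(h.windowMean_sub_windowMean_mem_of_le_add hsS hu.1 huv hv.2 hvu).2]
  have hu' : u ∈ Icc s S := ⟨hu, huv.trans hv⟩
  have hv' : v ∈ Icc s S := ⟨hu.trans huv, hv⟩
  constructor
  · linarith [hlow hu' hv' huv]
  · linarith [hupp hu' hv' huv]

end IsDensityBounded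

-- The paper's `μ_x`.
noncomputable def opinionMeasure (x : ℝ → ℝ) : Measure ℝ :=
  (volume.restrict (Icc 0 1)).map x

theorem opinionMeasure_apply {x : ℝ → ℝ} (hx : Measurable x) {t : Set ℝ} (ht : MeasurableSet t) :
    opinionMeasure x t = volume {α ∈ Icc (0 : ℝ) 1 | x α ∈ t} := by
  rw [opinionMeasure, Measure.map_apply hx ht, Measure.restrict_apply (hx ht), inter_comm]
  rfl

instance (x : ℝ → ℝ) : IsFiniteMeasure (opinionMeasure x) := by
  unfold opinionMeasure; infer_instance

theorem setIntegral_opinionMeasure {x : ℝ → ℝ} (hx : Measurable x) {t : Set ℝ}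
    (ht : MeasurableSet t) :
    ∫ w in t, w ∂opinionMeasure x = ∫ α in {α ∈ Icc (0 : ℝ) 1 | x α ∈ t}, x α := by
  rw [opinionMeasure, setIntegral_map ht measurable_id'.aestronglyMeasurable hx.aemeasurable,
    Measure.restrict_restrict (hx ht), inter_comm]
  rfl

theorem Uop_eq_windowMean {x : ℝ → ℝ} (hx : Measurable x) {α : ℝ}
    (hα : (opinionMeasure x).real (Ioo (x α - 1) (x α + 1)) ≠ 0) :
    Uop x α = windowMean (opinionMeasure x) (x α) := by
  have hset : {β ∈ Icc (0 : ℝ) 1 | |x α - x β| < 1} =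
      {β ∈ Icc (0 : ℝ) 1 | x β ∈ Ioo (x α - 1) (x α + 1)} := by
    ext β
    refine and_congr_right fun _ => ?_
    rw [mem_Ioo, abs_sub_lt_iff]
    constructor <;> rintro ⟨h₁, h₂⟩ <;> constructor <;> linarith
  have hne : opinionMeasure x (Ioo (x α - 1) (x α + 1)) ≠ 0 := fun h0 =>
    hα (by rw [measureReal_def, h0, ENNReal.toReal_zero])
  rw [Uop, hset, ← opinionMeasure_apply hx measurableSet_Ioo,
    ← setIntegral_opinionMeasure hx measurableSet_Ioo, if_neg hne]
  rfl

theorem RegularOpinion.exists_isDensityBounded {x : ℝ → ℝ} {s S : ℝ} (hx : Measurable x)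
    (hs : IsGLB (x '' Icc 0 1) s) (hS : IsLUB (x '' Icc 0 1) S) (hreg : RegularOpinion x) :
    ∃ m M, IsDensityBounded (opinionMeasure x) s S m M := by
  obtain ⟨m, M, hm, hmM, hbnd⟩ := hreg
  have hne : (x '' Icc 0 1).Nonempty := (nonempty_Icc.2 zero_le_one).image x
  rw [hs.csInf_eq hne, hS.csSup_eq hne] at hbnd
  refine ⟨m, M, hm, hmM, ?_, fun a b ha hab hb => ?_, fun a b ha hab hb => ?_⟩
  · exact (ae_map_iff hx.aemeasurable measurableSet_Icc).2 <|
      (ae_restrict_iff' measurableSet_Icc).2 <| ae_of_all _ fun α hα =>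
        ⟨hs.1 (mem_image_of_mem x hα), hS.1 (mem_image_of_mem x hα)⟩
  · rw [measureReal_def, opinionMeasure_apply hx measurableSet_Icc]
    exact (hbnd a b ha hab hb).1
  · rw [measureReal_def, opinionMeasure_apply hx measurableSet_Icc]
    exact (hbnd a b ha hab hb).2

section BiLipschitz

variable {g : ℝ → ℝ} {s S c C : ℝ}

theorem strictMonoOn_Icc_of_sub_mem_Icc (hc : 0 < c)
    (hg : ∀ u v, s ≤ u → u ≤ v → v ≤ S → g v - g u ∈ Icc (c * (v - u)) (C * (v - u))) :
    StrictMonoOn g (Icc s S) := fun u hu v hv huv => by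
  nlinarith [(hg u v hu.1 huv.le hv.2).1, mul_pos hc (sub_pos.2 huv)]

theorem lipschitzOnWith_Icc_of_sub_mem_Icc (hc : 0 ≤ c)
    (hg : ∀ u v, s ≤ u → u ≤ v → v ≤ S → g v - g u ∈ Icc (c * (v - u)) (C * (v - u))) :
    LipschitzOnWith (Real.toNNReal C) g (Icc s S) := by
  have key : ∀ u ∈ Icc s S, ∀ v ∈ Icc s S, u ≤ v → dist (g u) (g v) ≤ C * dist u v := by
    intro u hu v hv huv
    have h := hg u v hu.1 huv hv.2
    rw [Real.dist_eq, Real.dist_eq, abs_sub_comm (g u), abs_sub_comm u,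
      abs_of_nonneg (sub_nonneg.2 huv),
      abs_of_nonneg (h.1.trans' (mul_nonneg hc (sub_nonneg.2 huv)))]
    exact h.2
  refine LipschitzOnWith.of_dist_le' fun u hu v hv => ?_
  rcases le_total u v with huv | hvu
  · exact key u hu v hv huv
  · rw [dist_comm, dist_comm u]
    exact key v hv u hu hvu

end BiLipschitz

theorem RegularOpinion.of_eqOn_comp {x y g : ℝ → ℝ} {s S c C : ℝ}
    (hs : IsGLB (x '' Icc 0 1) s) (hS : IsLUB (x '' Icc 0 1) S) (hsS : s < S) (hc : 0 < c)
    (hg : ∀ u v, s ≤ u → u ≤ v → v ≤ S → g v - g u ∈ Icc (c * (v - u)) (C * (v - u)))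
    (hy : EqOn y (g ∘ x) (Icc 0 1)) (hreg : RegularOpinion x) : RegularOpinion y := by
  obtain ⟨m, M, hm, hmM, hbnd⟩ := hreg
  have hne : (x '' Icc 0 1).Nonempty := (nonempty_Icc.2 zero_le_one).image x
  rw [hs.csInf_eq hne, hS.csSup_eq hne] at hbnd
  have hxmem : MapsTo x (Icc 0 1) (Icc s S) := fun α hα =>
    ⟨hs.1 (mem_image_of_mem x hα), hS.1 (mem_image_of_mem x hα)⟩
  have hcC : c ≤ C := le_of_mul_le_mul_right
    ((hg s S le_rfl hsS.le le_rfl).1.trans (hg s S le_rfl hsS.le le_rfl).2) (sub_pos.2 hsS)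
  have hmono : StrictMonoOn g (Icc s S) := strictMonoOn_Icc_of_sub_mem_Icc hc hg
  have hcont : ContinuousOn g (Icc s S) :=
    (lipschitzOnWith_Icc_of_sub_mem_Icc hc.le hg).continuousOn
  have himage : y '' Icc 0 1 ⊆ Icc (g s) (g S) := by
    rintro _ ⟨α, hα, rfl⟩
    rw [hy hα]
    exact ⟨hmono.monotoneOn ⟨le_rfl, hsS.le⟩ (hxmem hα) (hxmem hα).1,
      hmono.monotoneOn (hxmem hα) ⟨hsS.le, le_rfl⟩ (hxmem hα).2⟩
  have hyne : (y '' Icc 0 1).Nonempty := (nonempty_Icc.2 zero_le_one).image y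
  refine ⟨m / C, M / c, div_pos hm (hc.trans_le hcC), div_le_div₀ (hm.le.trans hmM) hmM hc hcC,
    fun a b ha hab hb => ?_⟩
  have hsa : g s ≤ a := (le_csInf hyne fun _ h => (himage h).1).trans ha
  have hbS : b ≤ g S := hb.trans (csSup_le hyne fun _ h => (himage h).2)
  obtain ⟨a', ha', rfl⟩ := intermediate_value_Icc hsS.le hcont ⟨hsa, hab.trans hbS⟩
  obtain ⟨b', hb', rfl⟩ := intermediate_value_Icc hsS.le hcont ⟨hsa.trans hab, hbS⟩
  have hab' : a' ≤ b' := (hmono.le_iff_le ha' hb').1 hab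
  have hset : {α ∈ Icc (0 : ℝ) 1 | y α ∈ Icc (g a') (g b')} =
      {α ∈ Icc (0 : ℝ) 1 | x α ∈ Icc a' b'} := by
    ext α
    exact and_congr_right fun hα => by
      rw [hy hα, Function.comp_apply, mem_Icc, mem_Icc, hmono.le_iff_le ha' (hxmem hα),
        hmono.le_iff_le (hxmem hα) hb']
  rw [hset]
  obtain ⟨hlo, hhi⟩ := hbnd a' b' ha'.1 hab' hb'.2
  obtain ⟨hgl, hgu⟩ := hg a' b' ha'.1 hab' hb'.2
  have hC : 0 < C := hc.trans_le hcC
  have hM : 0 < M := hm.trans_le hmM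
  constructor
  · calc m / C * (g b' - g a') ≤ m / C * (C * (b' - a')) := by gcongr
      _ = m * (b' - a') := by field_simp
      _ ≤ _ := hlo
  · calc _ ≤ M * (b' - a') := hhi
      _ = M / c * (c * (b' - a')) := by field_simp
      _ ≤ M / c * (g b' - g a') := by gcongr

theorem regular_preserved_general (L : ℝ) (x : ℝ → ℝ) (hx : Measurable x)
    (hrange : ∀ α ∈ Set.Icc (0 : ℝ) 1, x α ∈ Set.Icc (0 : ℝ) L)
    (hreg : RegularOpinion x)
    (hspread :
      2 < sSup (x '' Set.Icc (0 : ℝ) 1) - sInf (x '' Set.Icc (0 : ℝ) 1)) :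
    RegularOpinion (Uop x) := by
  have hne : (x '' Icc 0 1).Nonempty := (nonempty_Icc.2 zero_le_one).image x
  have hs := isGLB_csInf hne ⟨0, forall_mem_image.2 fun α hα => (hrange α hα).1⟩
  have hS := isLUB_csSup hne ⟨L, forall_mem_image.2 fun α hα => (hrange α hα).2⟩
  obtain ⟨m, M, hμ⟩ := hreg.exists_isDensityBounded hx hs hS
  have hsS : sInf (x '' Icc 0 1) + 2 ≤ sSup (x '' Icc 0 1) := by linarith
  have hc : 0 < m ^ 2 / (32 * M ^ 2) := by
    have := hμ.m_pos
    have := hμ.M_pos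
    positivity
  refine hreg.of_eqOn_comp hs hS (by linarith) hc
    (fun u v hu huv hv => hμ.windowMean_sub_windowMean_mem hsS hu huv hv)
    fun α hα => Uop_eq_windowMean hx ?_
  have hxα := mem_image_of_mem x hα
  exact (hμ.m_pos.trans_le (hμ.le_measureReal_window (by linarith) ⟨hs.1 hxα, hS.1 hxα⟩)).ne'

/-- If `x ∈ X_L` is regular and `sup x − inf x > 2`, then `U(x)`
is regular. -/
theorem regular_preserved (L : ℝ) (hL : 0 < L) (x : ℝ → ℝ) (hx : Measurable x)
    (hrange : ∀ α ∈ Set.Icc (0 : ℝ) 1, x α ∈ Set.Icc (0 : ℝ) L)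
    (hreg : RegularOpinion x)
    (hspread :
      2 < sSup (x '' Set.Icc (0 : ℝ) 1) - sInf (x '' Set.Icc (0 : ℝ) 1)) :
    RegularOpinion (Uop x) :=
  regular_preserved_general L x hx hrange hreg hspread
end
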